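/- arXiv:math/9807027 — 11 statements merged into one kernel-verified Lean document; each statement's English description precedes it below -/
import Mathlib

section
/- Let F be a proper subfield of a field K of characteristic 0. Let p(x) = Σ_{k=0}^n a_k x^k ∈ K[x] be nonconstant with a_n ≠ 0, and let q(x) = Σ_{j=0}^m b_j x^j ∈ K[x] with b_m ≠ 0, such that a_n ∈ F, b_m ∈ F, and b_j ∉ F for some j ≥ 1. Then the composition p ∘ q has some coefficient not in F, and D_F(p ∘ q) = D_F(q). -/
open Polynomial

/-- The `F`-deficit of a polynomial `p`: `natDegree p` minus the largest index
of a coefficient not lying in `F`. When all coefficients lie in `F`, the set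
below is empty, `sSup ∅ = 0`, and the deficit equals `natDegree p`. -/
noncomputable def deficit {K : Type*} [Field K] (F : Subfield K) (p : K[X]) : ℕ :=
  p.natDegree - sSup {k : ℕ | p.coeff k ∉ F}

/-!
Let `n = deg p`, `m = deg q` and let `t` be the largest index with `q_t ∉ F`; then `1 ≤ t < m`.
Split `q = r + s` with `r ∈ F[X]` and `deg s ≤ t`. Since `t ≥ 1`, the powers `q^i` with `i < n`
stay below degree `(n - 1) m + t`, so from there on the coefficients of `p ∘ q` are those of
`a_n q^n = a_n r^n + a_n (q^n - r^n)`. The difference has degree `≤ (n - 1) m + t` with top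
coefficient `n r_m^(n-1) s_t`, which lies outside `F` because `n ≠ 0` in characteristic `0`.
So `(n - 1) m + t` is the largest index of a coefficient of `p ∘ q` outside `F`, and
`D_F(p ∘ q) = n m - (n - 1) m - t = m - t = D_F(q)`.
-/

namespace Polynomial

theorem coeff_comp_eq_leadingCoeff_mul_coeff_pow {R : Type*} [CommSemiring R] {p q : R[X]}
    {k : ℕ} (hk : (p.natDegree - 1) * q.natDegree < k) :
    (p.comp q).coeff k = p.leadingCoeff * (q ^ p.natDegree).coeff k := by
  have hlow : (p.eraseLead.comp q).natDegree < k :=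
    natDegree_comp_le.trans_lt
      ((Nat.mul_le_mul_right _ (eraseLead_natDegree_le p)).trans_lt hk)
  conv_lhs => rw [← eraseLead_add_C_mul_X_pow p]
  rw [add_comp, mul_comp, C_comp, X_pow_comp, coeff_add, coeff_C_mul,
    coeff_eq_zero_of_natDegree_lt hlow, zero_add]

theorem natDegree_add_pow_sub_pow_le_and_coeff {R : Type*} [CommRing R] {r s : R[X]}
    {m t : ℕ} (hr : r.natDegree ≤ m) (hs : s.natDegree ≤ t) (htm : t < m) (n : ℕ) :
    ((r + s) ^ (n + 1) - r ^ (n + 1)).natDegree ≤ n * m + t ∧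
      ((r + s) ^ (n + 1) - r ^ (n + 1)).coeff (n * m + t) =
        (n + 1) * r.coeff m ^ n * s.coeff t := by
  induction n with
  | zero => simp [hs]
  | succ n ih =>
    obtain ⟨hdeg, hcoeff⟩ := ih
    have hrs : (r + s).natDegree ≤ m := natDegree_add_le_of_degree_le hr (hs.trans htm.le)
    have hsm : s.coeff m = 0 := coeff_eq_zero_of_natDegree_lt (hs.trans_lt htm)
    have hpow : (r ^ (n + 1)).natDegree ≤ (n + 1) * m := natDegree_pow_le_of_le _ hr
    have hsplit : (r + s) ^ (n + 1 + 1) - r ^ (n + 1 + 1) =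
        ((r + s) ^ (n + 1) - r ^ (n + 1)) * (r + s) + r ^ (n + 1) * s := by ring
    have hidx : (n + 1) * m + t = (n * m + t) + m := by ring
    rw [hsplit]
    refine ⟨natDegree_add_le_of_degree_le ?_ ?_, ?_⟩
    · exact hidx ▸ natDegree_mul_le_of_le hdeg hrs
    · exact natDegree_mul_le_of_le hpow hs
    · rw [coeff_add, coeff_mul_add_eq_of_natDegree_le hpow hs, hidx,
        coeff_mul_add_eq_of_natDegree_le hdeg hrs, hcoeff, coeff_add, hsm,
        coeff_pow_of_natDegree_le hr]
      push_cast
      ring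

end Polynomial

section Deficit

variable {K : Type*} [Field K] (F : Subfield K)

theorem deficit_eq_of_isGreatest {p : K[X]} {d : ℕ} (h : IsGreatest {k | p.coeff k ∉ F} d) :
    deficit F p = p.natDegree - d := by
  rw [deficit, h.csSup_eq]

theorem exists_isGreatest_coeff_notMem {p : K[X]} (h : ∃ k, p.coeff k ∉ F) :
    ∃ d, IsGreatest {k | p.coeff k ∉ F} d := by
  refine BddAbove.exists_isGreatest_of_nonempty ⟨p.natDegree, fun k hk => ?_⟩ h
  by_contra hlt
  exact hk (coeff_eq_zero_of_natDegree_lt (not_le.1 hlt) ▸ F.zero_mem)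

theorem coeff_mem_of_mem_lifts {r : K[X]} (hr : r ∈ lifts F.subtype) (k : ℕ) : r.coeff k ∈ F := by
  obtain ⟨a, ha⟩ := (lifts_iff_coeff_lifts r).1 hr k
  exact ha ▸ a.2

theorem exists_mem_lifts_add_natDegree_le (q : K[X]) {t : ℕ}
    (h : ∀ k, t < k → q.coeff k ∈ F) :
    ∃ r ∈ lifts F.subtype, ∃ s : K[X], s.natDegree ≤ t ∧ q = r + s := by
  obtain ⟨s, hs⟩ : ∃ s : K[X], ∀ k, s.coeff k = if k ≤ t then q.coeff k else 0 :=
    ⟨∑ i ∈ Finset.range (t + 1), C (q.coeff i) * X ^ i, fun k => by simp⟩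
  refine ⟨q - s, (lifts_iff_coeff_lifts _).2 fun k => ⟨⟨(q - s).coeff k, ?_⟩, rfl⟩, s, ?_,
    by ring⟩
  · rw [coeff_sub, hs]
    split_ifs with hk
    · rw [sub_self]; exact F.zero_mem
    · rw [sub_zero]; exact h k (not_le.1 hk)
  · exact natDegree_le_iff_coeff_eq_zero.2 fun k hk => by
      rw [hs, if_neg (not_le.2 (by exact_mod_cast hk))]

theorem mem_of_mul_add_mul_mem {a b c x : K} (ha : a ∈ F) (ha0 : a ≠ 0) (hb : b ∈ F)
    (hc : c ∈ F) (hc0 : c ≠ 0) (h : a * (b + c * x) ∈ F) : x ∈ F := by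
  rw [show x = (a⁻¹ * (a * (b + c * x)) - b) / c by field_simp; ring]
  exact F.div_mem (F.sub_mem (F.mul_mem (F.inv_mem ha) h) hb) hc

theorem isGreatest_coeff_comp_notMem [CharZero K] {p r s : K[X]} {N t : ℕ}
    (hp : p.natDegree = N + 1) (hpl : p.leadingCoeff ∈ F) (hr : r ∈ lifts F.subtype)
    (hs : s.natDegree ≤ t) (hst : s.coeff t ∉ F) (ht : 0 < t)
    (htq : t < (r + s).natDegree) :
    IsGreatest {k | (p.comp (r + s)).coeff k ∉ F} (N * (r + s).natDegree + t) := by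
  obtain ⟨m, hm⟩ : ∃ m, (r + s).natDegree = m := ⟨_, rfl⟩
  rw [hm] at htq ⊢
  have hsm : s.coeff m = 0 := coeff_eq_zero_of_natDegree_lt (hs.trans_lt htq)
  have hrm : r.coeff m ≠ 0 := by
    have hrs : r + s ≠ 0 := by rintro h; simp [h] at hm; omega
    rwa [← leadingCoeff_ne_zero, leadingCoeff, hm, coeff_add, hsm, add_zero] at hrs
  have hrdeg : r.natDegree ≤ m := by
    simpa [hm] using natDegree_sub_le_of_le (p := r + s) (q := s) le_rfl (hs.trans htq.le)
  obtain ⟨hdeg, hcoeff⟩ := natDegree_add_pow_sub_pow_le_and_coeff hrdeg hs htq N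
  have hcomp : ∀ k, N * m + t ≤ k → (p.comp (r + s)).coeff k = p.leadingCoeff *
      ((r ^ (N + 1)).coeff k + ((r + s) ^ (N + 1) - r ^ (N + 1)).coeff k) := by
    intro k hk
    rw [coeff_comp_eq_leadingCoeff_mul_coeff_pow (by rw [hp, hm, Nat.add_sub_cancel]; omega),
      hp, coeff_sub, add_sub_cancel]
  have hrpow : ∀ k, (r ^ (N + 1)).coeff k ∈ F :=
    coeff_mem_of_mem_lifts F (pow_mem hr _)
  refine ⟨?_, fun k hk => not_lt.1 fun hlt => hk ?_⟩
  · show _ ∉ F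
    rw [hcomp _ le_rfl, hcoeff]
    have hp0 : p.leadingCoeff ≠ 0 := leadingCoeff_ne_zero.2 (by rintro rfl; simp at hp)
    have hc0 : ((N + 1 : K) * r.coeff m ^ N) ≠ 0 :=
      mul_ne_zero (by exact_mod_cast N.succ_ne_zero) (pow_ne_zero _ hrm)
    have hcF : (N + 1 : K) * r.coeff m ^ N ∈ F :=
      F.mul_mem (F.add_mem (natCast_mem F N) F.one_mem)
        (F.pow_mem (coeff_mem_of_mem_lifts F hr m) N)
    exact fun hmem => hst (mem_of_mul_add_mul_mem F hpl hp0 (hrpow _) hcF hc0 hmem)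
  · rw [hcomp k hlt.le, coeff_eq_zero_of_natDegree_lt (hdeg.trans_lt hlt), add_zero]
    exact F.mul_mem hpl (hrpow k)

end Deficit

theorem stmt0_general {K : Type*} [Field K] [CharZero K] (F : Subfield K)
    (p q : K[X]) (hp : 0 < p.natDegree)
    (hpl : p.leadingCoeff ∈ F) (hql : q.leadingCoeff ∈ F)
    (hj : ∃ j, 1 ≤ j ∧ q.coeff j ∉ F) :
    (∃ k, (p.comp q).coeff k ∉ F) ∧ deficit F (p.comp q) = deficit F q := by
  obtain ⟨j, hj1, hjF⟩ := hj
  obtain ⟨t, htF, htmax⟩ := exists_isGreatest_coeff_notMem F ⟨j, hjF⟩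
  have htq : t < q.natDegree :=
    (le_natDegree_of_ne_zero fun h => htF (h ▸ F.zero_mem)).lt_of_ne
      fun h => htF (h ▸ hql)
  obtain ⟨r, hr, s, hs, rfl⟩ :=
    exists_mem_lifts_add_natDegree_le F q fun k hk => not_not.1 fun h => (htmax h).not_gt hk
  have hst : s.coeff t ∉ F := fun h =>
    htF (by rw [coeff_add]; exact F.add_mem (coeff_mem_of_mem_lifts F hr t) h)
  obtain ⟨N, hN⟩ : ∃ N, p.natDegree = N + 1 := ⟨p.natDegree - 1, by omega⟩
  have hcomp := isGreatest_coeff_comp_notMem F hN hpl hr hs hst (hj1.trans (htmax hjF)) htq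
  refine ⟨⟨_, hcomp.1⟩, ?_⟩
  rw [deficit_eq_of_isGreatest F hcomp, deficit_eq_of_isGreatest F ⟨htF, htmax⟩, natDegree_comp,
    hN, Nat.succ_mul]
  omega

theorem stmt0 {K : Type*} [Field K] [CharZero K] (F : Subfield K) (hF : F ≠ ⊤)
    (p q : K[X]) (hp : 0 < p.natDegree) (hq : q ≠ 0)
    (hpl : p.leadingCoeff ∈ F) (hql : q.leadingCoeff ∈ F)
    (hj : ∃ j, 1 ≤ j ∧ q.coeff j ∉ F) :
    (∃ k, (p.comp q).coeff k ∉ F) ∧ deficit F (p.comp q) = deficit F q :=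
  stmt0_general F p q hp hpl hql hj
end

section
/- Let F be a proper subfield of a field K of characteristic 0. Let p(x) = Σ_{k=0}^n a_k x^k ∈ K[x] be nonconstant with a_n ≠ 0, and let q(x) = Σ_{j=0}^m b_j x^j ∈ K[x] with b_m ≠ 0, such that q has some coefficient not in F, and a_n, b_m, b_0 all lie in F. Then the composition p ∘ q has some coefficient not in F, and D_F(p ∘ q) = D_F(q). -/
open Polynomial

private lemma coeffs_mem_pow {K : Type*} [Field K] (F : Subfield K) {w : K[X]}
    (hw : ∀ i, w.coeff i ∈ F) (j : ℕ) : ∀ i, (w ^ j).coeff i ∈ F := by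
  induction j with
  | zero =>
    intro i
    simp only [pow_zero, coeff_one]
    split_ifs <;> [exact one_mem F; exact zero_mem F]
  | succ j ih =>
    intro i
    rw [pow_succ, coeff_mul]
    exact sum_mem fun x _ => mul_mem (ih _) (hw _)

theorem stmt1 {K : Type*} [Field K] [CharZero K] (F : Subfield K) (hF : F ≠ ⊤)
    (p q : K[X]) (hp : 0 < p.natDegree) (hq : q ≠ 0)
    (hqF : ∃ j, q.coeff j ∉ F)
    (hpl : p.leadingCoeff ∈ F) (hql : q.leadingCoeff ∈ F) (hq0 : q.coeff 0 ∈ F) :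
    (∃ k, (p.comp q).coeff k ∉ F) ∧ deficit F (p.comp q) = deficit F q := by
  classical
  set n := p.natDegree with hn
  set m := q.natDegree with hm
  obtain ⟨n', hn'⟩ : ∃ n', n = n' + 1 := ⟨n - 1, by omega⟩
  set S : Set ℕ := {k : ℕ | q.coeff k ∉ F} with hS
  have hSne : S.Nonempty := hqF
  have hSbdd : BddAbove S := ⟨m, fun k hk => by
    by_contra h
    push_neg at h
    exact hk (by rw [coeff_eq_zero_of_natDegree_lt h]; exact zero_mem F)⟩
  set t := sSup S with htdef
  have htS : q.coeff t ∉ F := Nat.sSup_mem hSne hSbdd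
  have ht_ub : ∀ k, t < k → q.coeff k ∈ F := by
    intro k hk
    by_contra h
    exact absurd (le_csSup hSbdd h) (not_le.mpr hk)
  have hqm : q.coeff m = q.leadingCoeff := rfl
  have hbm0 : q.coeff m ≠ 0 := by rw [hqm]; exact leadingCoeff_ne_zero.mpr hq
  have htm : t ≤ m := le_natDegree_of_ne_zero (fun h => htS (h ▸ zero_mem F))
  have htm' : t < m := lt_of_le_of_ne htm (fun h => htS (by rw [h, hqm]; exact hql))
  have ht0 : 0 < t := Nat.pos_of_ne_zero (fun h => htS (h ▸ hq0))
  -- split q = u + v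
  set u : K[X] := ∑ j ∈ Finset.range (t + 1), monomial j (q.coeff j) with hu
  set v : K[X] := q - u with hv
  have hu_coeff : ∀ i, u.coeff i = if i ≤ t then q.coeff i else 0 := by
    intro i
    rw [hu, finset_sum_coeff]
    simp [coeff_monomial, Finset.sum_ite_eq', Nat.lt_succ_iff]
  have hv_coeff : ∀ i, v.coeff i = if i ≤ t then 0 else q.coeff i := by
    intro i
    rw [hv, coeff_sub, hu_coeff]
    split_ifs <;> simp
  have hvF : ∀ i, v.coeff i ∈ F := by
    intro i
    rw [hv_coeff]
    split_ifs with h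
    · exact zero_mem F
    · exact ht_ub i (by omega)
  have hq_uv : q = u + v := by rw [hv]; ring
  have hu_deg : u.natDegree = t := by
    apply le_antisymm
    · apply natDegree_le_iff_coeff_eq_zero.mpr
      intro N hN
      rw [hu_coeff]; simp [Nat.not_le.mpr hN]
    · apply le_natDegree_of_ne_zero
      rw [hu_coeff, if_pos le_rfl]
      exact fun h => htS (h ▸ zero_mem F)
  have hu_lead : u.coeff t = q.coeff t := by rw [hu_coeff]; simp
  have hv_deg : v.natDegree = m := by
    apply le_antisymm
    · apply natDegree_le_iff_coeff_eq_zero.mpr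
      intro N hN
      rw [hv_coeff]
      split_ifs with h
      · rfl
      · exact coeff_eq_zero_of_natDegree_lt hN
    · apply le_natDegree_of_ne_zero
      rw [hv_coeff, if_neg (by omega)]
      exact hbm0
  have hv_lead : v.coeff m = q.coeff m := by rw [hv_coeff, if_neg (by omega)]
  -- key index
  set i₀ := n' * m + t with hi₀
  -- coefficients of q ^ n at high indices
  have K1 : ∀ i, i₀ ≤ i →
      (q ^ n).coeff i = (v ^ n).coeff i + (n : K) * ((u * v ^ n').coeff i) := by
    intro i hi
    rw [hq_uv, add_pow, hn']
    rw [Finset.sum_range_succ', Finset.sum_range_succ']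
    have hzero : ∀ k ∈ Finset.range n',
        (u ^ (k + 1 + 1) * v ^ (n' + 1 - (k + 1 + 1)) *
          ((n' + 1).choose (k + 1 + 1) : K[X])).coeff i = 0 := by
      intro k hk
      simp only [Finset.mem_range] at hk
      apply coeff_eq_zero_of_natDegree_lt
      have hd1 : (u ^ (k + 1 + 1) * v ^ (n' + 1 - (k + 1 + 1)) *
          ((n' + 1).choose (k + 1 + 1) : K[X])).natDegree
          ≤ (k + 2) * t + (n' - 1 - k) * m := by
        refine le_trans natDegree_mul_le ?_
        have hc : (((n' + 1).choose (k + 1 + 1) : K[X])).natDegree = 0 := natDegree_natCast _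
        rw [hc, add_zero]
        refine le_trans natDegree_mul_le (add_le_add ?_ ?_)
        · exact le_trans natDegree_pow_le (by rw [hu_deg])
        · refine le_trans natDegree_pow_le ?_
          rw [hv_deg]
          have h5 : n' + 1 - (k + 1 + 1) = n' - 1 - k := by omega
          rw [h5]
      refine lt_of_le_of_lt hd1 (lt_of_lt_of_le ?_ hi)
      have h1 : (k + 2) * t = t + (k + 1) * t := by ring
      have h2 : (k + 1) * t < (k + 1) * m := mul_lt_mul_of_pos_left htm' (by omega)
      have h3 : (k + 1) * m + (n' - 1 - k) * m ≤ n' * m := by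
        rw [← add_mul]
        exact mul_le_mul_left (by omega) m
      omega
    rw [coeff_add, coeff_add, finset_sum_coeff, Finset.sum_eq_zero hzero]
    have e1 : u ^ (0 + 1) * v ^ (n' + 1 - (0 + 1)) * ((n' + 1).choose (0 + 1) : K[X])
        = C ((n' + 1 : ℕ) : K) * (u * v ^ n') := by
      rw [Nat.choose_one_right, C_eq_natCast]
      norm_num
      ring
    have e0 : u ^ 0 * v ^ (n' + 1 - 0) * ((n' + 1).choose 0 : K[X]) = v ^ (n' + 1) := by
      simp
    rw [e1, e0, coeff_C_mul]
    push_cast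
    ring
  -- coefficients of p.comp q at high indices
  have K2 : ∀ i, i₀ ≤ i → (p.comp q).coeff i = p.leadingCoeff * (q ^ n).coeff i := by
    intro i hi
    show (eval₂ C q p).coeff i = _
    rw [eval₂_eq_sum_range, finset_sum_coeff, ← hn, hn', Finset.sum_range_succ]
    have hzero : ∀ k ∈ Finset.range (n' + 1), (C (p.coeff k) * q ^ k).coeff i = 0 := by
      intro k hk
      simp only [Finset.mem_range, Nat.lt_succ_iff] at hk
      apply coeff_eq_zero_of_natDegree_lt
      have hd : (C (p.coeff k) * q ^ k).natDegree ≤ k * m := by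
        refine le_trans natDegree_mul_le ?_
        rw [natDegree_C, zero_add]
        exact le_trans natDegree_pow_le (by rw [← hm])
      refine lt_of_le_of_lt hd (lt_of_lt_of_le ?_ hi)
      have : k * m ≤ n' * m := mul_le_mul_left hk m
      omega
    rw [Finset.sum_eq_zero hzero, zero_add, coeff_C_mul]
    congr 1
    rw [leadingCoeff, ← hn, hn']
  have K3 : (u * v ^ n').coeff i₀ = q.coeff t * (q.coeff m) ^ n' := by
    have hvp : (v ^ n').natDegree = n' * m := by rw [natDegree_pow, hv_deg]
    have hidx : i₀ = u.natDegree + (v ^ n').natDegree := by rw [hu_deg, hvp]; omega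
    rw [hidx, coeff_mul_degree_add_degree]
    congr 1
    · rw [leadingCoeff, hu_deg, hu_lead]
    · rw [leadingCoeff_pow, leadingCoeff, hv_deg, hv_lead]
  have K4 : ∀ i, i₀ < i → (u * v ^ n').coeff i = 0 := by
    intro i hi
    apply coeff_eq_zero_of_natDegree_lt
    refine lt_of_le_of_lt (le_trans natDegree_mul_le ?_) hi
    rw [hu_deg, natDegree_pow, hv_deg]
    omega
  have hp0 : p ≠ 0 := fun h => by rw [h, natDegree_zero] at hn; omega
  have han : p.leadingCoeff ≠ 0 := leadingCoeff_ne_zero.mpr hp0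
  have hnK : (n : K) ≠ 0 := Nat.cast_ne_zero.mpr (by omega)
  have main_notin : (p.comp q).coeff i₀ ∉ F := by
    rw [K2 i₀ le_rfl, K1 i₀ le_rfl, K3]
    intro hmem
    have h1 : (v ^ n).coeff i₀ + (n : K) * (q.coeff t * q.coeff m ^ n') ∈ F := by
      have h := mul_mem (inv_mem hpl) hmem
      rwa [inv_mul_cancel_left₀ han] at h
    have h2 : (n : K) * (q.coeff t * q.coeff m ^ n') ∈ F := by
      have h := sub_mem h1 (coeffs_mem_pow F hvF n i₀)
      rwa [add_sub_cancel_left] at h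
    have hmF : q.coeff m ∈ F := hqm ▸ hql
    have h3 : q.coeff t ∈ F := by
      have h := mul_mem (inv_mem (mul_mem (natCast_mem F n) (pow_mem hmF n'))) h2
      have heq : ((n : K) * q.coeff m ^ n')⁻¹ * ((n : K) * (q.coeff t * q.coeff m ^ n'))
          = q.coeff t := by
        field_simp
      rwa [heq] at h
    exact htS h3
  have main_in : ∀ i, i₀ < i → (p.comp q).coeff i ∈ F := by
    intro i hi
    rw [K2 i (le_of_lt hi), K1 i (le_of_lt hi), K4 i hi, mul_zero, add_zero]
    exact mul_mem hpl (coeffs_mem_pow F hvF n i)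
  refine ⟨⟨i₀, main_notin⟩, ?_⟩
  have hdegc : (p.comp q).natDegree = n * m := natDegree_comp
  have hS'bdd : BddAbove {k : ℕ | (p.comp q).coeff k ∉ F} :=
    ⟨i₀, fun k hk => by by_contra h; push_neg at h; exact hk (main_in k h)⟩
  have hsup : sSup {k : ℕ | (p.comp q).coeff k ∉ F} = i₀ :=
    le_antisymm
      (csSup_le ⟨i₀, main_notin⟩
        (fun k hk => by by_contra h; push_neg at h; exact hk (main_in k h)))
      (le_csSup hS'bdd main_notin)
  unfold deficit
  rw [hsup, hdegc, ← hS, ← htdef, ← hm, hn']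
  have hmul : (n' + 1) * m = n' * m + m := by ring
  omega
end

section
/- Let F be a proper subfield of a field K of characteristic 0. Let p(x) = Σ_{k=0}^n a_k x^k ∈ K[x] with a_n ≠ 0, and let q(x) = Σ_{j=0}^m b_j x^j be a polynomial all of whose coefficients lie in F, with b_m ≠ 0. Then D_F(p ∘ q) = D_F(p) · D_F(q). -/
open Polynomial

/-!
Let `s` be the largest index with `a_s ∉ F` and split `p = r + h`, where `r` keeps the
coefficients of index `≤ s` and `h` has all coefficients in `F`. Polynomials with coefficients
in `F` are closed under composition, so `p ∘ q` and `r ∘ q` agree modulo such polynomials. Since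
`q` has coefficients in `F`, the leading coefficient `a_s b_mˢ` of `r ∘ q` lies outside `F`, so
the last coefficient of `p ∘ q` outside `F` has index `s m`, and the deficit is `n m - s m`.
-/

namespace Polynomial

theorem coeff_comp_mem {R : Type*} [CommSemiring R] {S : Subsemiring R} {p q : R[X]}
    (hp : ∀ k, p.coeff k ∈ S) (hq : ∀ k, q.coeff k ∈ S) (k : ℕ) :
    (p.comp q).coeff k ∈ S := by
  obtain ⟨p', rfl⟩ := (mem_lifts p).1 <|
    (lifts_iff_coeff_lifts (f := S.subtype) p).2 fun k => ⟨⟨_, hp k⟩, rfl⟩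
  obtain ⟨q', rfl⟩ := (mem_lifts q).1 <|
    (lifts_iff_coeff_lifts (f := S.subtype) q).2 fun k => ⟨⟨_, hq k⟩, rfl⟩
  rw [← Polynomial.map_comp, coeff_map]
  exact SetLike.coe_mem _

theorem natDegree_mem_upperBounds_coeff_notMem {R : Type*} [Semiring R] (S : Subsemiring R)
    (p : R[X]) : p.natDegree ∈ upperBounds {k | p.coeff k ∉ S} :=
  fun _ hk => not_lt.1 fun hlt => hk (coeff_eq_zero_of_natDegree_lt hlt ▸ S.zero_mem)

theorem isGreatest_coeff_notMem_natDegree {R : Type*} [Semiring R] {S : Subsemiring R}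
    {p : R[X]} (hp : p.leadingCoeff ∉ S) : IsGreatest {k | p.coeff k ∉ S} p.natDegree :=
  ⟨hp, natDegree_mem_upperBounds_coeff_notMem S p⟩

theorem exists_isGreatest_coeff_notMem {R : Type*} [Semiring R] {S : Subsemiring R} {p : R[X]}
    (h : ∃ k, p.coeff k ∉ S) : ∃ s, IsGreatest {k | p.coeff k ∉ S} s :=
  have hbdd : BddAbove {k | p.coeff k ∉ S} := ⟨_, natDegree_mem_upperBounds_coeff_notMem S p⟩
  ⟨_, Nat.sSup_mem h hbdd, fun _ hk => le_csSup hbdd hk⟩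

theorem exists_leadingCoeff_notMem_sub_coeff_mem {R : Type*} [Ring R] {S : Subring R}
    {p : R[X]} {s : ℕ} (hs : IsGreatest {k | p.coeff k ∉ S} s) :
    ∃ r : R[X], r.natDegree = s ∧ r.leadingCoeff ∉ S ∧ ∀ k, (p - r).coeff k ∈ S := by
  classical
  set r := ∑ i ∈ Finset.range (s + 1), monomial i (p.coeff i)
  have hr : ∀ k, r.coeff k = if k ≤ s then p.coeff k else 0 := fun k => by
    simp only [r, finsetSum_coeff, coeff_monomial, Finset.sum_ite_eq', Finset.mem_range,
      Nat.lt_succ_iff]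
  have hdeg : r.natDegree = s := by
    refine le_antisymm (natDegree_le_iff_coeff_eq_zero.2 fun k hk => ?_)
      (le_natDegree_of_ne_zero ?_)
    · rw [hr, if_neg (not_le.2 hk)]
    · rw [hr, if_pos le_rfl]
      exact fun h0 => hs.1 (h0 ▸ S.zero_mem)
  refine ⟨r, hdeg, ?_, fun k => ?_⟩
  · rw [leadingCoeff, hdeg, hr, if_pos le_rfl]
    exact hs.1
  · rw [coeff_sub, hr]
    split_ifs with hk
    · rw [sub_self]; exact S.zero_mem
    · rw [sub_zero]; exact not_not.1 fun h => hk (hs.2 h)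

end Polynomial

section Deficit

variable {K : Type*} [Field K] {F : Subfield K} {p q : K[X]}

theorem deficit_eq_natDegree (hp : ∀ k, p.coeff k ∈ F) : deficit F p = p.natDegree := by
  simp [deficit, hp]

theorem deficit_eq_natDegree_sub {s : ℕ} (hs : IsGreatest {k | p.coeff k ∉ F} s) :
    deficit F p = p.natDegree - s := by
  rw [deficit, hs.csSup_eq]

theorem isGreatest_coeff_comp_notMem_s2 {s : ℕ} (hs : IsGreatest {k | p.coeff k ∉ F} s)
    (hq : ∀ k, q.coeff k ∈ F) (hq0 : q.natDegree ≠ 0) :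
    IsGreatest {k | (p.comp q).coeff k ∉ F} (s * q.natDegree) := by
  obtain ⟨r, hrs, hr, hpr⟩ := exists_leadingCoeff_notMem_sub_coeff_mem (S := F.toSubring) hs
  have hlc : (r.comp q).leadingCoeff ∉ F := by
    have hb0 : q.leadingCoeff ^ r.natDegree ≠ 0 :=
      pow_ne_zero _ (leadingCoeff_ne_zero.2 (ne_zero_of_natDegree_gt (Nat.pos_of_ne_zero hq0)))
    rw [leadingCoeff_comp hq0]
    have hb : q.leadingCoeff ^ r.natDegree ∈ F := F.pow_mem (hq _) _
    exact fun hmem => hr (by simpa [hb0] using F.mul_mem hmem (F.inv_mem hb))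
  have hdiff : ∀ k, (p.comp q - r.comp q).coeff k ∈ F := by
    rw [← sub_comp]
    exact coeff_comp_mem (S := F.toSubsemiring) hpr hq
  have hmem_iff : ∀ k, (p.comp q).coeff k ∈ F ↔ (r.comp q).coeff k ∈ F := fun k => by
    rw [← sub_add_cancel (p.comp q) (r.comp q), coeff_add, add_mem_cancel_left (hdiff k)]
  simp only [hmem_iff]
  rw [← hrs, ← natDegree_comp]
  exact isGreatest_coeff_notMem_natDegree (S := F.toSubsemiring) hlc

end Deficit

theorem stmt2_general {K : Type*} [Field K] (F : Subfield K)
    (p q : K[X])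
    (hqF : ∀ j, q.coeff j ∈ F) :
    deficit F (p.comp q) = deficit F p * deficit F q := by
  rw [deficit_eq_natDegree hqF]
  rcases eq_or_ne q.natDegree 0 with hq0 | hq0
  · simp [deficit, natDegree_comp, hq0]
  by_cases hpF : ∀ k, p.coeff k ∈ F
  · rw [deficit_eq_natDegree hpF,
      deficit_eq_natDegree (coeff_comp_mem (S := F.toSubsemiring) hpF hqF), natDegree_comp]
  · obtain ⟨s, hs⟩ := exists_isGreatest_coeff_notMem (S := F.toSubsemiring) (not_forall.1 hpF)
    rw [deficit_eq_natDegree_sub hs,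
      deficit_eq_natDegree_sub (isGreatest_coeff_comp_notMem_s2 hs hqF hq0), natDegree_comp,
      Nat.sub_mul]

theorem stmt2 {K : Type*} [Field K] [CharZero K] (F : Subfield K) (hF : F ≠ ⊤)
    (p q : K[X]) (hp : p ≠ 0) (hq : q ≠ 0)
    (hqF : ∀ j, q.coeff j ∈ F) :
    deficit F (p.comp q) = deficit F p * deficit F q :=
  stmt2_general F p q hqF
end

section
/- Let F be a proper subfield of a field K of characteristic 0. Let p(x) = Σ_{k=0}^n a_k x^k ∈ K[x] be nonconstant with a_n ≠ 0, and let q(x) = Σ_{j=0}^m b_j x^j ∈ K[x] with b_m ≠ 0, such that the product a_n · b_m lies in F. Then D_F(p ∘ q) ≥ D_F(q). -/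
open Polynomial

/-!
A deficit of at least `d` means that `natDegree p ≥ d` and that the top `d` coefficients of `p`
lie in `F`. In this form the deficit does not decrease under products, since
a coefficient of `f * g` near the top only involves coefficients near the tops of `f` and `g`;
so `deficit F q ≤ deficit F (q ^ n)`. Writing `p = a_n X ^ n + p₀` with `deg p₀ < n`, the term
`a_n q ^ n` keeps this deficit when `a_n ∈ F`, and `p₀ ∘ q` has degree at most
`(n - 1) m ≤ n m - deficit F q`, so it does not reach the top coefficients. If `deficit F q > 0`
then `b_m ∈ F`, hence `a_n ∈ F` because `a_n b_m ∈ F`.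
-/

namespace Polynomial

variable {K : Type*} [Field K] {F : Subfield K}

theorem le_deficit_iff {p : K[X]} {d : ℕ} :
    d ≤ deficit F p ↔ d ≤ p.natDegree ∧ ∀ i, p.natDegree < i + d → p.coeff i ∈ F := by
  have hbdd : BddAbove {k : ℕ | p.coeff k ∉ F} := by
    refine ⟨p.natDegree, fun k hk => ?_⟩
    by_contra! h
    exact hk (coeff_eq_zero_of_natDegree_lt h ▸ F.zero_mem)
  unfold deficit
  constructor
  · intro hd
    refine ⟨hd.trans (Nat.sub_le _ _), fun i hi => ?_⟩
    by_contra hi'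
    have := le_csSup hbdd hi'
    have : i ≤ p.natDegree := le_natDegree_of_ne_zero fun h => hi' (h ▸ F.zero_mem)
    omega
  · rintro ⟨hd, htop⟩
    have : sSup {k : ℕ | p.coeff k ∉ F} ≤ p.natDegree - d :=
      csSup_le' fun i hi => by
        by_contra! h
        exact hi (htop i (by omega))
    omega

theorem deficit_le_natDegree (p : K[X]) : deficit F p ≤ p.natDegree :=
  Nat.sub_le _ _

theorem leadingCoeff_mem_of_deficit_pos {p : K[X]} (h : 0 < deficit F p) : p.leadingCoeff ∈ F :=
  (le_deficit_iff.1 h).2 _ (Nat.lt_succ_self _)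

theorem le_deficit_mul {f g : K[X]} {d : ℕ} (hdf : d ≤ deficit F f) (hdg : d ≤ deficit F g) :
    d ≤ deficit F (f * g) := by
  rcases Nat.eq_zero_or_pos d with rfl | hd0
  · exact Nat.zero_le _
  obtain ⟨hfdeg, hf⟩ := le_deficit_iff.1 hdf
  obtain ⟨hgdeg, hg⟩ := le_deficit_iff.1 hdg
  have hf0 : f ≠ 0 := ne_zero_of_natDegree_gt (hd0.trans_le hfdeg)
  have hg0 : g ≠ 0 := ne_zero_of_natDegree_gt (hd0.trans_le hgdeg)
  rw [le_deficit_iff, natDegree_mul hf0 hg0]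
  refine ⟨by omega, fun i hi => ?_⟩
  rw [coeff_mul]
  refine F.sum_mem fun ⟨i₁, i₂⟩ hi₁₂ => ?_
  rw [Finset.HasAntidiagonal.mem_antidiagonal] at hi₁₂
  dsimp only at hi₁₂ ⊢
  by_cases h₁ : f.natDegree < i₁ + d
  · by_cases h₂ : g.natDegree < i₂ + d
    · exact F.mul_mem (hf i₁ h₁) (hg i₂ h₂)
    · rw [coeff_eq_zero_of_natDegree_lt (by omega : f.natDegree < i₁), zero_mul]
      exact F.zero_mem
  · rw [coeff_eq_zero_of_natDegree_lt (by omega : g.natDegree < i₂), mul_zero]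
    exact F.zero_mem

theorem deficit_le_deficit_pow (q : K[X]) {n : ℕ} (hn : n ≠ 0) :
    deficit F q ≤ deficit F (q ^ n) := by
  obtain ⟨n, rfl⟩ := Nat.exists_eq_succ_of_ne_zero hn
  induction n with
  | zero => rw [pow_one]
  | succ n ih => exact pow_succ q (n + 1) ▸ le_deficit_mul (ih n.succ_ne_zero) le_rfl

theorem deficit_C_mul {c : K} (hc : c ∈ F) (hc0 : c ≠ 0) (f : K[X]) :
    deficit F (C c * f) = deficit F f := by
  have hmem : ∀ x, c * x ∈ F ↔ x ∈ F := fun x =>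
    ⟨fun h => by simpa [hc0] using F.mul_mem (F.inv_mem hc) h, F.mul_mem hc⟩
  simp only [deficit, natDegree_C_mul hc0, coeff_C_mul, hmem]

theorem le_deficit_add {f g : K[X]} {d : ℕ} (hd : d ≤ deficit F f)
    (hg : g.natDegree + d ≤ f.natDegree) : d ≤ deficit F (f + g) := by
  rcases Nat.eq_zero_or_pos d with rfl | hd0
  · exact Nat.zero_le _
  obtain ⟨hfdeg, hf⟩ := le_deficit_iff.1 hd
  rw [le_deficit_iff, natDegree_add_eq_left_of_natDegree_lt (by omega)]
  refine ⟨hfdeg, fun i hi => ?_⟩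
  rw [coeff_add, coeff_eq_zero_of_natDegree_lt (by omega : g.natDegree < i), add_zero]
  exact hf i hi

end Polynomial

theorem stmt3_general {K : Type*} [Field K] (F : Subfield K)
    (p q : K[X]) (hp : 0 < p.natDegree)
    (hprod : p.leadingCoeff * q.leadingCoeff ∈ F) :
    deficit F q ≤ deficit F (p.comp q) := by
  obtain hd0 | hd0 := (deficit F q).eq_zero_or_pos
  · exact hd0 ▸ Nat.zero_le _
  have hq : q ≠ 0 := ne_zero_of_natDegree_gt (hd0.trans_le (deficit_le_natDegree q))
  have ha0 : p.leadingCoeff ≠ 0 := leadingCoeff_ne_zero.2 (ne_zero_of_natDegree_gt hp)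
  have ha : p.leadingCoeff ∈ F := by
    simpa [leadingCoeff_ne_zero.2 hq] using
      F.mul_mem hprod (F.inv_mem (leadingCoeff_mem_of_deficit_pos hd0))
  rw [← p.eraseLead_add_C_mul_X_pow, add_comp, add_comm, mul_comp, C_comp, X_pow_comp]
  refine le_deficit_add ((deficit_C_mul ha ha0 _).symm ▸ deficit_le_deficit_pow q hp.ne') ?_
  rw [natDegree_C_mul ha0, natDegree_pow]
  calc (p.eraseLead.comp q).natDegree + deficit F q
      ≤ (p.natDegree - 1) * q.natDegree + q.natDegree :=
        add_le_add (natDegree_comp_le.trans (Nat.mul_le_mul_right _ (eraseLead_natDegree_le p)))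
          (deficit_le_natDegree q)
    _ = p.natDegree * q.natDegree := by rw [← Nat.add_one_mul, Nat.sub_one_add_one hp.ne']

theorem stmt3 {K : Type*} [Field K] [CharZero K] (F : Subfield K) (hF : F ≠ ⊤)
    (p q : K[X]) (hp : 0 < p.natDegree) (hq : q ≠ 0)
    (hprod : p.leadingCoeff * q.leadingCoeff ∈ F) :
    deficit F q ≤ deficit F (p.comp q) :=
  stmt3_general F p q hp hprod
end

section
/- Let F be a proper subfield of a field K of characteristic 0. Let q(x) = Σ_{j=0}^m b_j x^j be a nonconstant polynomial all of whose coefficients lie in F, with b_m ≠ 0, and let p(x) = Σ_{k=0}^n a_k x^k ∈ K[x] with a_n ≠ 0. If all coefficients of the composition p ∘ q lie in F, then all coefficients of p lie in F. -/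
open Polynomial

private lemma pow_coeff_mem {K : Type*} [Field K] (F : Subfield K) {q : K[X]}
    (hqF : ∀ j, q.coeff j ∈ F) (n : ℕ) : ∀ k, (q ^ n).coeff k ∈ F := by
  induction n with
  | zero =>
    intro k
    simp only [pow_zero, Polynomial.coeff_one]
    split
    · exact F.one_mem
    · exact F.zero_mem
  | succ n ih =>
    intro k
    rw [pow_succ, Polynomial.coeff_mul]
    exact sum_mem fun x _ => F.mul_mem (ih _) (hqF _)

private lemma const_case {K : Type*} [Field K] (F : Subfield K) {q p : K[X]}
    (hpn : p.natDegree ≤ 0) (hcomp : ∀ k, (p.comp q).coeff k ∈ F) :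
    ∀ k, p.coeff k ∈ F := by
  intro k
  rw [Polynomial.eq_C_of_natDegree_le_zero hpn]
  have := hcomp 0
  rw [Polynomial.eq_C_of_natDegree_le_zero hpn] at this
  simp only [Polynomial.C_comp, Polynomial.coeff_C] at this ⊢
  split
  · simpa using this
  · exact F.zero_mem

private lemma key_aux {K : Type*} [Field K] (F : Subfield K) {q : K[X]}
    (hq : 0 < q.natDegree) (hqF : ∀ j, q.coeff j ∈ F) :
    ∀ n : ℕ, ∀ p : K[X], p.natDegree ≤ n →
      (∀ k, (p.comp q).coeff k ∈ F) → ∀ k, p.coeff k ∈ F := by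
  intro n
  induction n with
  | zero => exact fun p hpn hcomp => const_case F hpn hcomp
  | succ n ih =>
    intro p hpn hcomp
    by_cases hd0 : p.natDegree = 0
    · exact const_case F (le_of_eq hd0) hcomp
    have hp0 : p ≠ 0 := fun h => hd0 (by simp [h])
    have hb : q.leadingCoeff ≠ 0 := Polynomial.leadingCoeff_ne_zero.2 (fun h => by simp [h] at hq)
    have hlc : (p.comp q).leadingCoeff = p.leadingCoeff * q.leadingCoeff ^ p.natDegree :=
      Polynomial.leadingCoeff_comp hq.ne'
    have hmem : p.leadingCoeff * q.leadingCoeff ^ p.natDegree ∈ F := by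
      rw [← hlc]; exact hcomp _
    have hbpow : (q.leadingCoeff ^ p.natDegree) ∈ F := F.pow_mem (hqF _) _
    have ha : p.leadingCoeff ∈ F := by
      have : p.leadingCoeff = (p.leadingCoeff * q.leadingCoeff ^ p.natDegree) *
          (q.leadingCoeff ^ p.natDegree)⁻¹ := by
        field_simp
      rw [this]
      exact F.mul_mem hmem (F.inv_mem hbpow)
    have hsplit : p.eraseLead + Polynomial.C p.leadingCoeff * Polynomial.X ^ p.natDegree = p :=
      p.eraseLead_add_C_mul_X_pow
    have hdeg' : p.eraseLead.natDegree ≤ n := by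
      have := p.eraseLead_natDegree_le
      omega
    have hcompeq : p.eraseLead.comp q =
        p.comp q - Polynomial.C p.leadingCoeff * q ^ p.natDegree := by
      rw [eq_sub_iff_add_eq]
      have h2 := congrArg (fun r : K[X] => r.comp q) hsplit
      simpa only [Polynomial.add_comp, Polynomial.mul_comp, Polynomial.C_comp,
        Polynomial.pow_comp, Polynomial.X_comp] using h2
    have hcomp' : ∀ k, (p.eraseLead.comp q).coeff k ∈ F := by
      intro k
      rw [hcompeq, Polynomial.coeff_sub, Polynomial.coeff_C_mul]
      exact F.sub_mem (hcomp k) (F.mul_mem ha (pow_coeff_mem F hqF _ _))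
    have hcoef' := ih p.eraseLead hdeg' hcomp'
    intro k
    have : p.coeff k = p.eraseLead.coeff k +
        (Polynomial.C p.leadingCoeff * Polynomial.X ^ p.natDegree).coeff k := by
      rw [← Polynomial.coeff_add, hsplit]
    rw [this, Polynomial.coeff_C_mul, Polynomial.coeff_X_pow]
    refine F.add_mem (hcoef' k) ?_
    split
    · simpa using ha
    · simp only [mul_zero]; exact F.zero_mem

theorem stmt5 {K : Type*} [Field K] [CharZero K] (F : Subfield K) (hF : F ≠ ⊤)
    (p q : K[X]) (hp : p ≠ 0) (hq : 0 < q.natDegree)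
    (hqF : ∀ j, q.coeff j ∈ F)
    (hcomp : ∀ k, (p.comp q).coeff k ∈ F) :
    ∀ k, p.coeff k ∈ F :=
  key_aux F hq hqF p.natDegree p le_rfl hcomp
end

section
/- Let F be a proper subfield of a field K of characteristic 0. Let p, q ∈ K[x], with q(x) = Σ_{j=0}^m b_j x^j, b_m ≠ 0, and suppose the leading coefficient b_m and the constant term b_0 of q both lie in F. If all coefficients of the composition p ∘ q lie in F, then either all coefficients of p lie in F or all coefficients of q lie in F. Moreover, if in addition p ∘ q is not constant, then all coefficients of p lie in F and all coefficients of q lie in F. -/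
open Polynomial

lemma memF_iff {K : Type*} [Field K] (F : Subfield K) (a : K[X]) :
    a ∈ lifts (algebraMap F K) ↔ ∀ i, a.coeff i ∈ F := by
  rw [lifts_iff_coeff_lifts]
  constructor
  · intro h i; obtain ⟨y, hy⟩ := h i; rw [← hy]; exact y.2
  · intro h i; exact ⟨⟨_, h i⟩, rfl⟩

lemma mem_of_mul {K : Type*} [Field K] {F : Subfield K} {a b : K}
    (ha : a ∈ F) (ha0 : a ≠ 0) (h : a * b ∈ F) : b ∈ F := by
  have := F.mul_mem (F.inv_mem ha) h
  rwa [inv_mul_cancel_left₀ ha0] at this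

lemma lowPart_coeff {K : Type*} [Field K] (a : K[X]) (j i : ℕ) :
    (∑ k ∈ Finset.range (j+1), C (a.coeff k) * X ^ k).coeff i
      = if i ≤ j then a.coeff i else 0 := by
  rw [finset_sum_coeff]
  simp [coeff_C_mul, coeff_X_pow, Finset.sum_ite_eq, Nat.lt_succ_iff]

lemma key1 {K : Type*} [Field K] [CharZero K] (F : Subfield K) (p q : K[X])
    (hn : p.natDegree ≠ 0) (hanF : p.leadingCoeff ∈ F) (hql : q.leadingCoeff ∈ F)
    (hcomp : ∀ k, (p.comp q).coeff k ∈ F)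
    (j : ℕ) (hj1 : 1 ≤ j) (hjm : j < q.natDegree)
    (hup : ∀ i, j < i → q.coeff i ∈ F) : q.coeff j ∈ F := by
  by_cases hbj : q.coeff j = 0
  · rw [hbj]; exact F.zero_mem
  set n := p.natDegree with hn_def
  set m := q.natDegree with hm_def
  have hq0 : q ≠ 0 := fun h => hbj (by rw [h, coeff_zero])
  have hp0 : p ≠ 0 := fun h => hn (by rw [hn_def, h, natDegree_zero])
  have hbm : q.coeff m ≠ 0 := by
    rw [← leadingCoeff]; exact leadingCoeff_ne_zero.2 hq0
  have han : p.leadingCoeff ≠ 0 := leadingCoeff_ne_zero.2 hp0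
  set s : K[X] := ∑ k ∈ Finset.range (j+1), C (q.coeff k) * X ^ k with hs_def
  set t : K[X] := q - s with ht_def
  have hsc : ∀ i, s.coeff i = if i ≤ j then q.coeff i else 0 := fun i => lowPart_coeff q j i
  have htc : ∀ i, t.coeff i = if i ≤ j then 0 else q.coeff i := by
    intro i
    rw [ht_def, coeff_sub, hsc]
    split <;> simp
  -- t has natDegree m and leadingCoeff q.coeff m
  have htm : t.coeff m = q.coeff m := by rw [htc]; simp [Nat.not_le.2 hjm]
  have ht_deg : t.natDegree = m := by
    apply le_antisymm
    · rw [natDegree_le_iff_coeff_eq_zero]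
      intro N hN
      rw [htc]
      split
      · rfl
      · exact coeff_eq_zero_of_natDegree_lt hN
    · exact le_natDegree_of_ne_zero (htm ▸ hbm)
  have ht_lead : t.leadingCoeff = q.coeff m := by rw [leadingCoeff, ht_deg, htm]
  -- s has natDegree j and leadingCoeff q.coeff j
  have hsj : s.coeff j = q.coeff j := by rw [hsc]; simp
  have hs_deg : s.natDegree = j := by
    apply le_antisymm
    · rw [natDegree_le_iff_coeff_eq_zero]
      intro N hN
      rw [hsc]
      simp [Nat.not_le.2 hN]
    · exact le_natDegree_of_ne_zero (hsj ▸ hbj)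
  have hs_lead : s.leadingCoeff = q.coeff j := by rw [leadingCoeff, hs_deg, hsj]
  have htF : ∀ i, t.coeff i ∈ F := by
    intro i
    rw [htc]
    split
    · exact F.zero_mem
    · exact hup i (by omega)
  set D : ℕ := (n-1)*m + j with hD_def
  -- Step A : (p.comp q).coeff D = an * (q^n).coeff D
  have hA : (p.comp q).coeff D = p.leadingCoeff * (q^n).coeff D := by
    conv_lhs => rw [← eraseLead_add_C_mul_X_pow p]
    rw [add_comp, mul_comp, C_comp, X_pow_comp, coeff_add, coeff_C_mul]
    have : (p.eraseLead.comp q).coeff D = 0 := by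
      apply coeff_eq_zero_of_natDegree_lt
      rw [natDegree_comp]
      calc p.eraseLead.natDegree * m ≤ (n-1) * m :=
            Nat.mul_le_mul_right m (eraseLead_natDegree_le p)
        _ < D := by omega
    rw [this, zero_add]
  -- Step B : (q^n).coeff D
  have hB : (q^n).coeff D
      = (t^n).coeff D + q.coeff m ^ (n-1) * q.coeff j * (n : K) := by
    have hq_eq : q = t + s := by rw [ht_def]; ring
    conv_lhs => rw [hq_eq, add_pow]
    rw [finset_sum_coeff]
    have hsplit : ∀ k ∈ Finset.range (n+1), k ∉ ({n-1, n} : Finset ℕ) →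
        (t ^ k * s ^ (n - k) * (n.choose k : K[X])).coeff D = 0 := by
      intro k hk hk'
      simp only [Finset.mem_insert, Finset.mem_singleton, not_or] at hk'
      rw [Finset.mem_range] at hk
      apply coeff_eq_zero_of_natDegree_lt
      calc (t ^ k * s ^ (n - k) * (n.choose k : K[X])).natDegree
          ≤ (t^k * s^(n-k)).natDegree + (n.choose k : K[X]).natDegree := natDegree_mul_le
        _ ≤ ((t^k).natDegree + (s^(n-k)).natDegree) + 0 := by
            gcongr
            · exact natDegree_mul_le
            · exact natDegree_natCast _ |>.le
        _ ≤ k * m + (n - k) * j := by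
            rw [add_zero]
            gcongr
            · calc (t^k).natDegree ≤ k * t.natDegree := natDegree_pow_le
                _ = k * m := by rw [ht_deg]
            · calc (s^(n-k)).natDegree ≤ (n-k) * s.natDegree := natDegree_pow_le
                _ = (n-k) * j := by rw [hs_deg]
        _ < D := by
            have hk2 : k ≤ n - 2 := by omega
            obtain ⟨a, ha⟩ : ∃ a, n - k = a + 1 := ⟨n - k - 1, by omega⟩
            have h1 : a * j < a * m :=
              Nat.mul_lt_mul_of_pos_left hjm (by omega)
            have h3 : (n-k) * j = a*j + j := by rw [ha, add_mul, one_mul]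
            rw [h3]
            have h2 : (n-1) * m = k * m + a*m := by
              have hnn : n - 1 = k + a := by omega
              rw [hnn, add_mul]
            rw [hD_def, h2]
            linarith
    rw [← Finset.sum_subset (s₁ := ({n-1, n} : Finset ℕ))
        (by intro x hx; simp only [Finset.mem_insert, Finset.mem_singleton] at hx
            rcases hx with rfl | rfl <;> simp [Finset.mem_range] <;> omega) hsplit]
    rw [Finset.sum_pair (by omega : n - 1 ≠ n)]
    have e1 : (t ^ (n-1) * s ^ (n - (n-1)) * (n.choose (n-1) : K[X])).coeff D
        = q.coeff m ^ (n-1) * q.coeff j * (n : K) := by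
      have h1 : n - (n - 1) = 1 := by omega
      have h2 : n.choose (n-1) = n := by
        rw [← Nat.choose_symm (by omega : n - 1 ≤ n)]
        simp [Nat.sub_sub_self (by omega : 1 ≤ n)]
      rw [h1, h2, pow_one, ← C_eq_natCast, coeff_mul_C]
      congr 1
      have hD' : D = (t^(n-1)).natDegree + s.natDegree := by
        rw [natDegree_pow, ht_deg, hs_deg]
      rw [hD', coeff_mul_degree_add_degree, leadingCoeff_pow, ht_lead, hs_lead]
    have e2 : (t ^ n * s ^ (n - n) * (n.choose n : K[X])).coeff D = (t^n).coeff D := by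
      simp
    rw [e1, e2, add_comm]
  -- combine
  have h1 : p.leadingCoeff * ((t^n).coeff D + q.coeff m ^ (n-1) * q.coeff j * (n:K)) ∈ F := by
    rw [← hB, ← hA]; exact hcomp D
  have h2 : (t^n).coeff D + q.coeff m ^ (n-1) * q.coeff j * (n:K) ∈ F :=
    mem_of_mul hanF han h1
  have htnF : (t^n).coeff D ∈ F := by
    have : t^n ∈ lifts (algebraMap F K) := pow_mem ((memF_iff F t).2 htF) n
    exact (memF_iff F _).1 this D
  have h3 : q.coeff m ^ (n-1) * q.coeff j * (n:K) ∈ F := by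
    have := F.sub_mem h2 htnF
    simpa using this
  have h4 : (q.coeff m ^ (n-1) * (n:K)) * q.coeff j ∈ F := by
    have : q.coeff m ^ (n-1) * q.coeff j * (n:K)
        = (q.coeff m ^ (n-1) * (n:K)) * q.coeff j := by ring
    rwa [this] at h3
  have hqlm : q.coeff m ∈ F := by rw [hm_def, coeff_natDegree]; exact hql
  refine mem_of_mul ?_ ?_ h4
  · exact F.mul_mem (F.pow_mem hqlm _) (natCast_mem F n)
  · exact mul_ne_zero (pow_ne_zero _ hbm) (Nat.cast_ne_zero.2 hn)

lemma key2 {K : Type*} [Field K] [CharZero K] (F : Subfield K) (p q : K[X])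
    (hm : q.natDegree ≠ 0) (hqF : ∀ i, q.coeff i ∈ F)
    (hcomp : ∀ k, (p.comp q).coeff k ∈ F)
    (k : ℕ) (hup : ∀ i, k < i → p.coeff i ∈ F) : p.coeff k ∈ F := by
  by_cases hak : p.coeff k = 0
  · rw [hak]; exact F.zero_mem
  have hq0 : q ≠ 0 := fun h => hm (by rw [h, natDegree_zero])
  have hbm : q.leadingCoeff ≠ 0 := leadingCoeff_ne_zero.2 hq0
  have hqlF : q.leadingCoeff ∈ F := by rw [← coeff_natDegree]; exact hqF _
  set m := q.natDegree with hm_def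
  set l : K[X] := ∑ i ∈ Finset.range (k+1), C (p.coeff i) * X ^ i with hl_def
  set u : K[X] := p - l with hu_def
  have hlc : ∀ i, l.coeff i = if i ≤ k then p.coeff i else 0 := fun i => lowPart_coeff p k i
  have huc : ∀ i, u.coeff i = if i ≤ k then 0 else p.coeff i := by
    intro i; rw [hu_def, coeff_sub, hlc]; split <;> simp
  have huF : ∀ i, u.coeff i ∈ F := by
    intro i; rw [huc]; split
    · exact F.zero_mem
    · exact hup i (by omega)
  have hlk : l.coeff k = p.coeff k := by rw [hlc]; simp
  have hl_deg : l.natDegree = k := by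
    apply le_antisymm
    · rw [natDegree_le_iff_coeff_eq_zero]
      intro N hN; rw [hlc]; simp [Nat.not_le.2 hN]
    · exact le_natDegree_of_ne_zero (hlk ▸ hak)
  have hl_lead : l.leadingCoeff = p.coeff k := by rw [leadingCoeff, hl_deg, hlk]
  have hqlifts : q ∈ lifts (algebraMap F K) := (memF_iff F q).2 hqF
  have huq : ∀ i, (u.comp q).coeff i ∈ F := by
    have : u.comp q ∈ lifts (algebraMap F K) := by
      rw [comp_eq_sum_left, Polynomial.sum]
      refine Subsemiring.sum_mem _ (fun i _ => mul_mem ?_ (pow_mem hqlifts i))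
      refine (memF_iff F _).2 (fun d => ?_)
      rw [coeff_C]
      split
      · exact huF i
      · exact F.zero_mem
    exact fun i => (memF_iff F _).1 this i
  have hsplit : (p.comp q).coeff (k*m)
      = p.coeff k * q.leadingCoeff ^ k + (u.comp q).coeff (k*m) := by
    have hp_eq : p = l + u := by rw [hu_def]; ring
    conv_lhs => rw [hp_eq]
    rw [add_comp, coeff_add]
    congr 1
    have hdeg : (l.comp q).natDegree = k * m := by rw [natDegree_comp, hl_deg]
    have hcf : (l.comp q).coeff (k*m) = (l.comp q).leadingCoeff := by
      rw [leadingCoeff, hdeg]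
    rw [hcf, leadingCoeff_comp hm, hl_lead, hl_deg]
  have h1 : p.coeff k * q.leadingCoeff ^ k ∈ F := by
    have h0 : (p.comp q).coeff (k*m) ∈ F := hcomp _
    rw [hsplit] at h0
    have := F.sub_mem h0 (huq (k*m))
    simpa using this
  have h2 : q.leadingCoeff ^ k * p.coeff k ∈ F := by rwa [mul_comm] at h1
  exact mem_of_mul (F.pow_mem hqlF k) (pow_ne_zero _ hbm) h2

theorem stmt6 {K : Type*} [Field K] [CharZero K] (F : Subfield K) (hF : F ≠ ⊤)
    (p q : K[X]) (hq : q ≠ 0)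
    (hql : q.leadingCoeff ∈ F) (hq0 : q.coeff 0 ∈ F)
    (hcomp : ∀ k, (p.comp q).coeff k ∈ F) :
    ((∀ k, p.coeff k ∈ F) ∨ (∀ j, q.coeff j ∈ F)) ∧
      ((p.comp q).natDegree ≠ 0 →
        (∀ k, p.coeff k ∈ F) ∧ (∀ j, q.coeff j ∈ F)) := by
  by_cases hn : p.natDegree = 0
  · have hp : ∀ k, p.coeff k ∈ F := by
      intro k
      rcases Nat.eq_zero_or_pos k with rfl | hk
      · have hpc : p.comp q = C (p.coeff 0) := by
          conv_lhs => rw [eq_C_of_natDegree_eq_zero hn]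
          rw [C_comp]
        have := hcomp 0
        rwa [hpc, coeff_C_zero] at this
      · rw [coeff_eq_zero_of_natDegree_lt (by omega)]
        exact F.zero_mem
    have hdeg : (p.comp q).natDegree = 0 := by rw [natDegree_comp, hn, zero_mul]
    exact ⟨Or.inl hp, fun h => absurd hdeg h⟩
  by_cases hm : q.natDegree = 0
  · have hqc : ∀ j, q.coeff j ∈ F := by
      intro j
      rcases Nat.eq_zero_or_pos j with rfl | hj
      · exact hq0
      · rw [coeff_eq_zero_of_natDegree_lt (by omega)]
        exact F.zero_mem
    have hdeg : (p.comp q).natDegree = 0 := by rw [natDegree_comp, hm, mul_zero]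
    exact ⟨Or.inr hqc, fun h => absurd hdeg h⟩
  have hbm0 : q.leadingCoeff ≠ 0 := leadingCoeff_ne_zero.2 hq
  have hanF : p.leadingCoeff ∈ F := by
    have h1 : (p.comp q).coeff (p.natDegree * q.natDegree) ∈ F := hcomp _
    have h2 : (p.comp q).coeff (p.natDegree * q.natDegree)
        = p.leadingCoeff * q.leadingCoeff ^ p.natDegree := by
      rw [← natDegree_comp, coeff_natDegree]
      exact leadingCoeff_comp hm
    rw [h2] at h1
    have h3 : q.leadingCoeff ^ p.natDegree * p.leadingCoeff ∈ F := by rwa [mul_comm] at h1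
    exact mem_of_mul (F.pow_mem hql _) (pow_ne_zero _ hbm0) h3
  have hqF : ∀ j, q.coeff j ∈ F := by
    have main : ∀ d j, q.natDegree ≤ j + d → q.coeff j ∈ F := by
      intro d
      induction d with
      | zero =>
        intro j hj
        rcases eq_or_lt_of_le (by omega : q.natDegree ≤ j) with h | h
        · rw [← h, coeff_natDegree]; exact hql
        · rw [coeff_eq_zero_of_natDegree_lt h]; exact F.zero_mem
      | succ d ih =>
        intro j hj
        by_cases h : q.natDegree ≤ j + d
        · exact ih j h
        rcases Nat.eq_zero_or_pos j with rfl | hj1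
        · exact hq0
        exact key1 F p q hn hanF hql hcomp j hj1 (by omega) (fun i hi => ih i (by omega))
    intro j
    exact main q.natDegree j (by omega)
  have hpF : ∀ k, p.coeff k ∈ F := by
    have main : ∀ d k, p.natDegree ≤ k + d → p.coeff k ∈ F := by
      intro d
      induction d with
      | zero =>
        intro k hk
        refine key2 F p q hm hqF hcomp k (fun i hi => ?_)
        rw [coeff_eq_zero_of_natDegree_lt (by omega)]
        exact F.zero_mem
      | succ d ih =>
        intro k hk
        by_cases h : p.natDegree ≤ k + d
        · exact ih k h
        exact key2 F p q hm hqF hcomp k (fun i hi => ih i (by omega))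
    intro k
    exact main p.natDegree k (by omega)
  exact ⟨Or.inr hqF, fun _ => ⟨hpF, hqF⟩⟩
end

section
/- Let F be a proper subfield of a field K of characteristic 0. Then for every nonzero polynomial p ∈ K[x] and every positive integer r, D_F(p^[r]) ≥ D_F(p). -/
open Polynomial

/-- The `r`-th iterate of a polynomial under composition: `polyIter p 1 = p`
and `polyIter p (r+1) = p.comp (polyIter p r)`. -/
noncomputable def polyIter {K : Type*} [Field K] (p : K[X]) : ℕ → K[X]
  | 0 => X
  | r + 1 => p.comp (polyIter p r)

/-!
Write `n`, `d` for the degrees of `p`, `q` and let `s ≤ min (D_F p) (D_F q)`. Then every coefficient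
of `p ∘ q = ∑ pᵢ qⁱ` of index above `n d - s` lies in `F`: the terms with `i ≤ n - s` have degree
at most `(n - s) d ≤ n d - s`, while for `i > n - s` the coefficient `pᵢ` lies in `F` and, by the same
bookkeeping applied to products, so do the top `s` coefficients of `qⁱ`. Hence `D_F` of a composition
is at least the minimum of the two deficits, and the iterates follow by induction.
-/

namespace Polynomial

variable {K : Type*} [Field K] (F : Subfield K)

/-- Every coefficient of `p` of index greater than `N - s` lies in `F`; stated as `N < k + s`
to avoid truncated subtraction. -/
def TopCoeffsMem (p : K[X]) (N s : ℕ) : Prop :=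
  ∀ k, N < k + s → p.coeff k ∈ F

namespace TopCoeffsMem

variable {F}

theorem mono {p : K[X]} {N N' s s' : ℕ} (h : TopCoeffsMem F p N s) (hN : N ≤ N') (hs : s' ≤ s) :
    TopCoeffsMem F p N' s' :=
  fun k hk => h k (by omega)

theorem of_natDegree_add_le {p : K[X]} {N s : ℕ} (h : p.natDegree + s ≤ N) :
    TopCoeffsMem F p N s := fun k hk => by
  rw [coeff_eq_zero_of_natDegree_lt (by omega)]
  exact F.zero_mem

theorem one (s : ℕ) : TopCoeffsMem F (1 : K[X]) 0 s := fun k _ => by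
  rw [coeff_one]
  split_ifs
  exacts [F.one_mem, F.zero_mem]

theorem C_mul {c : K} {p : K[X]} {N s : ℕ} (hc : c ∈ F) (h : TopCoeffsMem F p N s) :
    TopCoeffsMem F (C c * p) N s := fun k hk => by
  rw [coeff_C_mul]
  exact F.mul_mem hc (h k hk)

theorem sum {ι : Type*} {t : Finset ι} {f : ι → K[X]} {N s : ℕ}
    (h : ∀ i ∈ t, TopCoeffsMem F (f i) N s) : TopCoeffsMem F (∑ i ∈ t, f i) N s := fun k hk => by
  rw [finsetSum_coeff]
  exact F.sum_mem fun i hi => h i hi k hk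

/-- In `∑_{i+j=k} aᵢ bⱼ` with `k` above `A + B - s`, either both indices are above their
thresholds `A - s`, `B - s`, or one of them exceeds the degree bound of the other factor. -/
theorem mul {a b : K[X]} {A B s : ℕ} (ha : TopCoeffsMem F a A s) (hb : TopCoeffsMem F b B s)
    (hadeg : a.natDegree ≤ A) (hbdeg : b.natDegree ≤ B) : TopCoeffsMem F (a * b) (A + B) s :=
  fun k hk => by
  rw [coeff_mul]
  refine F.sum_mem fun x hx => ?_
  rw [Finset.HasAntidiagonal.mem_antidiagonal] at hx
  by_cases hi : A < x.1 + s
  · by_cases hj : B < x.2 + s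
    · exact F.mul_mem (ha _ hi) (hb _ hj)
    · rw [coeff_eq_zero_of_natDegree_lt (p := a) (by omega), zero_mul]
      exact F.zero_mem
  · rw [coeff_eq_zero_of_natDegree_lt (p := b) (by omega), mul_zero]
    exact F.zero_mem

theorem pow {q : K[X]} {d s : ℕ} (h : TopCoeffsMem F q d s) (hdeg : q.natDegree ≤ d) (i : ℕ) :
    TopCoeffsMem F (q ^ i) (i * d) s := by
  induction i with
  | zero => simpa using one s
  | succ i ih =>
    rw [pow_succ, add_one_mul]
    exact ih.mul h (natDegree_pow_le.trans (Nat.mul_le_mul_left i hdeg)) hdeg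

theorem comp {p q : K[X]} {n d s : ℕ} (hp : TopCoeffsMem F p n s) (hq : TopCoeffsMem F q d s)
    (hpdeg : p.natDegree ≤ n) (hqdeg : q.natDegree ≤ d) (hsd : s ≤ d) :
    TopCoeffsMem F (p.comp q) (n * d) s := by
  rw [comp_eq_sum_left]
  refine sum fun i hi => ?_
  dsimp only
  have hin : i ≤ n := (le_natDegree_of_mem_supp i hi).trans hpdeg
  have hqi : (q ^ i).natDegree ≤ i * d := natDegree_pow_le.trans (Nat.mul_le_mul_left i hqdeg)
  by_cases hi : n < i + s
  · exact C_mul (hp i hi) ((hq.pow hqdeg i).mono (Nat.mul_le_mul_right d hin) le_rfl)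
  · have hsn : s ≤ (n - i) * d := by
      rcases Nat.eq_zero_or_pos s with rfl | hs
      · exact Nat.zero_le _
      · exact hsd.trans (Nat.le_mul_of_pos_left d (by omega))
    have hdeg := (natDegree_C_mul_le (p.coeff i) (q ^ i)).trans hqi
    have : i * d + (n - i) * d = n * d := by rw [← Nat.add_mul, Nat.add_sub_cancel' hin]
    exact of_natDegree_add_le (by omega)

end TopCoeffsMem

theorem le_deficit_iff_s8 {p : K[X]} {s : ℕ} :
    s ≤ deficit F p ↔ s ≤ p.natDegree ∧ TopCoeffsMem F p p.natDegree s := by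
  have hub : p.natDegree ∈ upperBounds {k | p.coeff k ∉ F} := fun k hk =>
    le_natDegree_of_ne_zero fun h => hk (h ▸ F.zero_mem)
  have hsup := csSup_le' hub
  unfold deficit
  constructor
  · refine fun hs => ⟨by omega, fun k hk => by_contra fun hk' => ?_⟩
    have := le_csSup ⟨_, hub⟩ hk'
    omega
  · rintro ⟨hs, htop⟩
    have : sSup {k | p.coeff k ∉ F} ≤ p.natDegree - s :=
      csSup_le' fun k hk => by_contra fun h => hk (htop k (by omega))
    omega

theorem le_deficit_comp {p q : K[X]} {s : ℕ} (hp : s ≤ deficit F p) (hq : s ≤ deficit F q) :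
    s ≤ deficit F (p.comp q) := by
  obtain ⟨hsp, hp⟩ := (le_deficit_iff_s8 F).1 hp
  obtain ⟨hsq, hq⟩ := (le_deficit_iff_s8 F).1 hq
  refine (le_deficit_iff_s8 F).2 ⟨?_, ?_⟩
  · rw [natDegree_comp]
    rcases Nat.eq_zero_or_pos p.natDegree with h | h
    · omega
    · exact hsq.trans (Nat.le_mul_of_pos_left _ h)
  · rw [natDegree_comp]
    exact hp.comp hq le_rfl le_rfl hsq

end Polynomial

theorem stmt8_general {K : Type*} [Field K] (F : Subfield K) :
    ∀ p : K[X], p ≠ 0 → ∀ r : ℕ, 1 ≤ r →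
      deficit F p ≤ deficit F (polyIter p r) := by
  intro p _ r hr
  induction r, hr using Nat.le_induction with
  | base => simp [polyIter]
  | succ r _ ih => exact le_deficit_comp F le_rfl ih

theorem stmt8 {K : Type*} [Field K] [CharZero K] (F : Subfield K) (hF : F ≠ ⊤) :
    ∀ p : K[X], p ≠ 0 → ∀ r : ℕ, 1 ≤ r →
      deficit F p ≤ deficit F (polyIter p r) :=
  stmt8_general F
end

section
/- Let F be a proper subfield of a field K of characteristic 0. Let p(x) = Σ_{k=0}^n a_k x^k ∈ K[x] be nonconstant with 0 ≠ a_n ∈ F. Let q ∈ K[x,y] be a nonzero polynomial in two variables with some coefficient not in F, written q(x,y) = Σ_{j=0}^m q_j(x,y) with each q_j homogeneous of degree j and q_m ≠ 0, where all coefficients of q_m lie in F. If q_j has some coefficient not in F for some j ≥ 1, then the composition p(q(x,y)) has some coefficient not in F, and D_F(p(q(x,y))) = D_F(q). -/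
/-
Let `m = deg q`, `n = deg p`, and let `t` be the largest degree in which `q` has a homogeneous
component with a coefficient outside `F`; the hypotheses give `1 ≤ t < m`. Split `q = A + B`
with all coefficients of `A` in `F` and `deg B ≤ t`. In every degree `s ≥ s₀ = (n - 1) m + t`,
the lower powers of `q` and the binomial terms containing `B²` are invisible, so `p(q)` agrees
there with `aₙ (Aⁿ + n Aⁿ⁻¹ B)`. Above `s₀` this has coefficients in `F`; in degree `s₀` it is an
`F`-polynomial plus `n aₙ q_mⁿ⁻¹ q_t`, and a nonzero polynomial with coefficients in `F` times one
with a coefficient outside `F` still has a coefficient outside `F`. Since `deg p(q) = n m`, the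
deficit of `p(q)` is `n m - s₀ = m - t`, the deficit of `q`.
-/

open Polynomial

/-- The `F`-deficit of a polynomial `q` in two variables: the total degree of `q`
minus the largest `k` such that the degree-`k` homogeneous component of `q` has
some coefficient not in `F`.  When all coefficients of `q` lie in `F`, the set
below is empty, `sSup ∅ = 0`, and the deficit equals the total degree. -/
noncomputable def deficit2 {K : Type*} [Field K] (F : Subfield K)
    (q : MvPolynomial (Fin 2) K) : ℕ :=
  q.totalDegree -
    sSup {k : ℕ | ∃ d, MvPolynomial.coeff d (MvPolynomial.homogeneousComponent k q) ∉ F}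

theorem Submodule.exists_ker_eq {k V : Type*} [DivisionRing k] [AddCommGroup V] [Module k V]
    (p : Submodule k V) : ∃ φ : V →ₗ[k] V, LinearMap.ker φ = p := by
  obtain ⟨q, hpq⟩ := p.exists_isCompl
  exact ⟨q.projection p hpq.symm, ker_projection _⟩

open Finset

namespace MvPolynomial

variable {σ R K : Type*}

section Degrees

variable [CommRing R] {f g : MvPolynomial σ R} {a b : ℕ}

theorem le_totalDegree_of_homogeneousComponent_ne_zero (h : homogeneousComponent a f ≠ 0) :
    a ≤ f.totalDegree :=
  not_lt.1 (mt (homogeneousComponent_eq_zero _ _) h)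

theorem homogeneousComponent_totalDegree_ne_zero (hf : f ≠ 0) :
    homogeneousComponent f.totalDegree f ≠ 0 := by
  obtain ⟨d, hd, hdeg⟩ := f.support.exists_mem_eq_sup (support_nonempty.2 hf)
    fun s => s.sum fun _ e => e
  have hdeg' : d.degree = f.totalDegree := hdeg.symm
  intro h0
  have := congr_arg (coeff d) h0
  rw [coeff_homogeneousComponent, if_pos hdeg', coeff_zero] at this
  exact mem_support_iff.1 hd this

theorem homogeneousComponent_add_mul (hf : f.totalDegree ≤ a) (hg : g.totalDegree ≤ b) :
    homogeneousComponent (a + b) (f * g) =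
      homogeneousComponent a f * homogeneousComponent b g := by
  classical
  ext d
  rw [coeff_homogeneousComponent, coeff_mul, coeff_mul]
  have key : ∀ x ∈ antidiagonal d,
      coeff x.1 (homogeneousComponent a f) * coeff x.2 (homogeneousComponent b g) =
        if d.degree = a + b then coeff x.1 f * coeff x.2 g else 0 := by
    intro x hx
    have hdeg : d.degree = x.1.degree + x.2.degree := by
      rw [← mem_antidiagonal.1 hx, map_add]
    simp only [coeff_homogeneousComponent]
    by_cases h1 : coeff x.1 f = 0
    · simp [h1]
    by_cases h2 : coeff x.2 g = 0
    · simp [h2]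
    have h1' : x.1.degree ≤ a := (le_totalDegree (mem_support_iff.2 h1)).trans hf
    have h2' : x.2.degree ≤ b := (le_totalDegree (mem_support_iff.2 h2)).trans hg
    split_ifs <;> first | rfl | (exfalso; omega) | simp
  rw [sum_congr rfl key, sum_ite_irrel, sum_const_zero]

theorem homogeneousComponent_mul_pow (hf : f.totalDegree ≤ a) (k : ℕ) :
    homogeneousComponent (k * a) (f ^ k) = homogeneousComponent a f ^ k := by
  induction k with
  | zero => simp
  | succ k ih =>
    rw [Nat.succ_mul, pow_succ, pow_succ, homogeneousComponent_add_mul _ hf, ih]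
    exact (totalDegree_pow f k).trans (Nat.mul_le_mul_left k hf)

theorem totalDegree_add_pow_sub_le {u v : MvPolynomial σ R} (hu : u.totalDegree ≤ a)
    (hv : v.totalDegree ≤ b) (hba : b ≤ a) (n : ℕ) :
    ((u + v) ^ (n + 2) - u ^ (n + 2) - (n + 2) • (u ^ (n + 1) * v)).totalDegree ≤
      n * a + 2 * b := by
  have hexp : (u + v) ^ (n + 2) - u ^ (n + 2) - (n + 2) • (u ^ (n + 1) * v) =
      ∑ i ∈ range (n + 1),
        v ^ (i + 2) * u ^ (n - i) * ((n + 2).choose (i + 2) : MvPolynomial σ R) := by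
    rw [add_comm u v, add_pow, sum_range_succ', sum_range_succ']
    simp only [Nat.reduceSubDiff, zero_add, pow_one, Nat.add_one_sub_one, Nat.choose_one_right,
      Nat.cast_add, Nat.cast_ofNat, pow_zero, tsub_zero, one_mul, Nat.choose_zero_right,
      Nat.cast_one, mul_one, add_sub_cancel_right, nsmul_eq_mul]
    ring
  rw [hexp]
  refine totalDegree_finsetSum_le fun i hi => ?_
  obtain ⟨j, rfl⟩ := Nat.exists_eq_add_of_le (mem_range_succ_iff.1 hi)
  rw [← Nat.cast_comm, ← nsmul_eq_mul]
  calc _ ≤ (v ^ (i + 2) * u ^ (i + j - i)).totalDegree := totalDegree_smul_le _ _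
    _ ≤ (i + 2) * b + j * a := by
      rw [Nat.add_sub_cancel_left]
      exact (totalDegree_mul _ _).trans (add_le_add ((totalDegree_pow _ _).trans
        (Nat.mul_le_mul_left _ hv)) ((totalDegree_pow _ _).trans (Nat.mul_le_mul_left _ hu)))
    _ ≤ (i + j) * a + 2 * b := by nlinarith

theorem homogeneousComponent_add_pow {u v : MvPolynomial σ R} {m t n s : ℕ}
    (hu : u.totalDegree ≤ m) (hv : v.totalDegree ≤ t) (htm : t < m) (hn : 0 < n)
    (hs : (n - 1) * m + t ≤ s) :
    homogeneousComponent s ((u + v) ^ n) =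
      homogeneousComponent s (u ^ n) + n • homogeneousComponent s (u ^ (n - 1) * v) := by
  obtain _ | _ | n := n
  · omega
  · simp
  · have hlt : n * m + 2 * t < s := by
      have : (n + 1) * m + t ≤ s := by simpa using hs
      nlinarith
    have h0 := homogeneousComponent_eq_zero s _
      ((totalDegree_add_pow_sub_le hu hv htm.le n).trans_lt hlt)
    rw [map_sub, map_sub, map_nsmul, sub_sub, sub_eq_zero] at h0
    exact h0

theorem totalDegree_aeval_le (p : R[X]) (q : MvPolynomial σ R) :
    (Polynomial.aeval q p).totalDegree ≤ p.natDegree * q.totalDegree := by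
  rw [aeval_eq_sum_range]
  refine totalDegree_finsetSum_le fun k hk => ?_
  refine (totalDegree_smul_le _ _).trans ((totalDegree_pow q k).trans ?_)
  exact Nat.mul_le_mul_right _ (mem_range_succ_iff.1 hk)

theorem homogeneousComponent_aeval_of_lt (p : R[X]) (q : MvPolynomial σ R) {s : ℕ}
    (hs : (p.natDegree - 1) * q.totalDegree < s) :
    homogeneousComponent s (Polynomial.aeval q p) =
      p.leadingCoeff • homogeneousComponent s (q ^ p.natDegree) := by
  have hlow : homogeneousComponent s (Polynomial.aeval q p.eraseLead) = 0 :=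
    homogeneousComponent_eq_zero _ _ ((totalDegree_aeval_le _ _).trans_lt
      ((Nat.mul_le_mul_right _ p.eraseLead_natDegree_le).trans_lt hs))
  conv_lhs => rw [← p.eraseLead_add_C_mul_X_pow]
  rw [map_add, map_mul, Polynomial.aeval_C, map_pow, Polynomial.aeval_X, map_add, hlow,
    zero_add, algebraMap_eq, homogeneousComponent_C_mul, smul_eq_C_mul]

theorem totalDegree_aeval [IsDomain R] (p : R[X]) (q : MvPolynomial σ R) :
    (Polynomial.aeval q p).totalDegree = p.natDegree * q.totalDegree := by
  refine (totalDegree_aeval_le p q).antisymm ?_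
  rcases Nat.eq_zero_or_pos (p.natDegree * q.totalDegree) with h | h
  · exact h ▸ Nat.zero_le _
  obtain ⟨hn, hm⟩ := CanonicallyOrderedAdd.mul_pos.1 h
  have hq : q ≠ 0 := by rintro rfl; simp at hm
  apply le_totalDegree_of_homogeneousComponent_ne_zero
  rw [homogeneousComponent_aeval_of_lt p q (Nat.mul_lt_mul_of_pos_right (by omega) hm),
    homogeneousComponent_mul_pow le_rfl, smul_eq_C_mul]
  exact mul_ne_zero (C_ne_zero.2 (leadingCoeff_ne_zero.2 (ne_zero_of_natDegree_gt hn)))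
    (pow_ne_zero _ (homogeneousComponent_totalDegree_ne_zero hq))

theorem homogeneousComponent_aeval_add {u v : MvPolynomial σ R} {m t s : ℕ} (p : R[X])
    (hu : u.totalDegree ≤ m) (hv : v.totalDegree ≤ t) (ht : 0 < t) (htm : t < m)
    (hp : 0 < p.natDegree) (hs : (p.natDegree - 1) * m + t ≤ s) :
    homogeneousComponent s (Polynomial.aeval (u + v) p) =
      p.leadingCoeff • (homogeneousComponent s (u ^ p.natDegree) +
        p.natDegree • homogeneousComponent s (u ^ (p.natDegree - 1) * v)) := by
  have huv : (u + v).totalDegree ≤ m := (totalDegree_add _ _).trans (max_le hu (hv.trans htm.le))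
  rw [homogeneousComponent_aeval_of_lt p _ ((Nat.mul_le_mul_left _ huv).trans_lt (by omega)),
    homogeneousComponent_add_pow hu hv htm hp hs]

end Degrees

section Subfield

variable [Field K] (F : Subfield K) {f g h : MvPolynomial σ K}

noncomputable def coeffSubring (σ : Type*) : Subring (MvPolynomial σ K) :=
  (map F.subtype).range

variable {F}

theorem mem_coeffSubring : f ∈ coeffSubring F σ ↔ ∀ d, coeff d f ∈ F := by
  have := mem_range_map_iff_coeffs_subset (f := F.subtype) (x := f)
  rw [coeffSubring, RingHom.mem_range, ← Set.mem_range, this]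
  simp only [Set.subset_def, Finset.mem_coe, mem_coeffs_iff, Subfield.coe_subtype,
    Subtype.range_coe_subtype, Set.mem_ofPred_eq, forall_exists_index]
  refine ⟨fun H d => ?_, fun H x d ⟨_, hx⟩ => hx ▸ H d⟩
  by_cases hd : coeff d f = 0
  · exact hd ▸ zero_mem F
  · exact H _ d ⟨mem_support_iff.2 hd, rfl⟩

theorem C_mem_coeffSubring {a : K} (ha : a ∈ F) : C a ∈ coeffSubring F σ := by
  classical
  exact mem_coeffSubring.2 fun d => by
    rw [coeff_C]
    split_ifs
    exacts [ha, zero_mem F]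

theorem homogeneousComponent_mem_coeffSubring (hf : f ∈ coeffSubring F σ) (k : ℕ) :
    homogeneousComponent k f ∈ coeffSubring F σ := by
  rw [mem_coeffSubring] at hf ⊢
  intro d
  rw [coeff_homogeneousComponent]
  split_ifs
  exacts [hf d, zero_mem F]

theorem mem_coeffSubring_of_mul_mem (hg0 : g ≠ 0) (hg : g ∈ coeffSubring F σ)
    (hgh : g * h ∈ coeffSubring F σ) : h ∈ coeffSubring F σ := by
  -- Applied coefficientwise, an `F`-linear `φ : K → K` with kernel `F` commutes with
  -- multiplication by `g` and detects membership in `coeffSubring F σ`.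
  obtain ⟨φ, hφ⟩ := (1 : Submodule F K).exists_ker_eq
  have hφF : ∀ x, φ x = 0 ↔ x ∈ F := fun x => by
    rw [← LinearMap.mem_ker, hφ, Submodule.mem_one]
    exact ⟨fun ⟨y, hy⟩ => hy ▸ y.2, fun hx => ⟨⟨x, hx⟩, rfl⟩⟩
  let Φ : MvPolynomial σ K → MvPolynomial σ K := AddMonoidAlgebra.map (φ : K →+ K)
  have hΦ : ∀ f d, coeff d (Φ f) = φ (coeff d f) := fun _ _ => rfl
  have hΦ0 : ∀ f, Φ f = 0 ↔ f ∈ coeffSubring F σ := fun f => by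
    simp only [MvPolynomial.ext_iff, hΦ, coeff_zero, hφF, mem_coeffSubring]
  have hmul : Φ (g * h) = g * Φ h := by
    classical
    ext d
    rw [hΦ, coeff_mul, coeff_mul, map_sum]
    refine sum_congr rfl fun x _ => ?_
    rw [hΦ]
    exact φ.map_smul ⟨_, mem_coeffSubring.1 hg x.1⟩ _
  rw [← hΦ0] at hgh ⊢
  exact (mul_eq_zero.1 (hmul ▸ hgh)).resolve_left hg0

theorem exists_add_of_homogeneousComponent_mem {t : ℕ}
    (hf : ∀ k, t < k → homogeneousComponent k f ∈ coeffSubring F σ) :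
    ∃ A ∈ coeffSubring F σ, A.totalDegree ≤ f.totalDegree ∧
      ∃ B : MvPolynomial σ K, B.totalDegree ≤ t ∧ f = A + B := by
  classical
  refine ⟨∑ k ∈ range (f.totalDegree + 1) with t < k, homogeneousComponent k f,
    sum_mem fun k hk => hf k (mem_filter.1 hk).2, totalDegree_finsetSum_le fun k hk => ?_,
    ∑ k ∈ range (f.totalDegree + 1) with ¬t < k, homogeneousComponent k f,
    totalDegree_finsetSum_le fun k hk => ?_, ?_⟩
  · exact (homogeneousComponent_isHomogeneous k f).totalDegree_le.trans
      (mem_range_succ_iff.1 (mem_filter.1 hk).1)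
  · exact (homogeneousComponent_isHomogeneous k f).totalDegree_le.trans
      (not_lt.1 (mem_filter.1 hk).2)
  · rw [sum_filter_add_sum_filter_not, sum_homogeneousComponent]

variable (F) in
def degreesNotIn (f : MvPolynomial σ K) : Set ℕ :=
  {k | homogeneousComponent k f ∉ coeffSubring F σ}

theorem le_totalDegree_of_mem_degreesNotIn {k : ℕ} (hk : k ∈ degreesNotIn F f) :
    k ≤ f.totalDegree :=
  le_totalDegree_of_homogeneousComponent_ne_zero fun h => hk (h ▸ zero_mem _)

variable (F) in
theorem bddAbove_degreesNotIn (f : MvPolynomial σ K) : BddAbove (degreesNotIn F f) :=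
  ⟨f.totalDegree, fun _ => le_totalDegree_of_mem_degreesNotIn⟩

theorem isGreatest_degreesNotIn_aeval [CharZero K] {p : K[X]} {q : MvPolynomial σ K} {t : ℕ}
    (hp : 0 < p.natDegree) (hpl : p.leadingCoeff ∈ F) (ht : IsGreatest (degreesNotIn F q) t)
    (ht0 : 0 < t) (htm : t < q.totalDegree) :
    IsGreatest (degreesNotIn F (Polynomial.aeval q p))
      ((p.natDegree - 1) * q.totalDegree + t) := by
  obtain ⟨A, hA, hAm, B, hBt, rfl⟩ := exists_add_of_homogeneousComponent_mem (F := F) (f := q)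
    fun k hk => by_contra fun h => absurd (ht.2 h) (not_le.2 hk)
  set m := (A + B).totalDegree
  have hAn : ∀ s, p.leadingCoeff • homogeneousComponent s (A ^ p.natDegree) ∈ coeffSubring F σ :=
    fun s => by
      rw [smul_eq_C_mul]
      exact mul_mem (C_mem_coeffSubring hpl)
        (homogeneousComponent_mem_coeffSubring (pow_mem hA _) s)
  have hAn1 : (A ^ (p.natDegree - 1)).totalDegree ≤ (p.natDegree - 1) * m :=
    (totalDegree_pow _ _).trans (Nat.mul_le_mul_left _ hAm)
  have hcomp := fun s => homogeneousComponent_aeval_add (s := s) p hAm hBt ht0 htm hp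
  refine ⟨fun hmem => ?_, fun s hs => ?_⟩
  · have hAtop : homogeneousComponent m A ≠ 0 := by
      have hq0 : A + B ≠ 0 := fun h => by simp [m, h] at htm
      have := homogeneousComponent_totalDegree_ne_zero hq0
      rwa [map_add, homogeneousComponent_eq_zero _ B (hBt.trans_lt htm), add_zero] at this
    have hBt_notMem : homogeneousComponent t B ∉ coeffSubring F σ := fun h => ht.1 <| by
      rw [map_add]
      exact add_mem (homogeneousComponent_mem_coeffSubring hA t) h
    set g := C (p.leadingCoeff * p.natDegree) *
      homogeneousComponent m A ^ (p.natDegree - 1) with hg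
    have hg0 : g ≠ 0 := mul_ne_zero (C_ne_zero.2 (mul_ne_zero
      (leadingCoeff_ne_zero.2 (ne_zero_of_natDegree_gt hp)) (Nat.cast_ne_zero.2 hp.ne')))
      (pow_ne_zero _ hAtop)
    have hgF : g ∈ coeffSubring F σ := mul_mem
      (C_mem_coeffSubring (mul_mem hpl (natCast_mem F _)))
      (pow_mem (homogeneousComponent_mem_coeffSubring hA _) _)
    rw [hcomp _ le_rfl, homogeneousComponent_add_mul hAn1 hBt, homogeneousComponent_mul_pow hAm,
      smul_add, add_mem_cancel_left (hAn _)] at hmem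
    refine hBt_notMem (mem_coeffSubring_of_mul_mem hg0 hgF ?_)
    convert hmem using 1
    simp only [hg, smul_eq_C_mul, nsmul_eq_mul, map_mul, map_natCast]
    ring
  · by_contra! hlt
    have hdeg : (A ^ (p.natDegree - 1) * B).totalDegree < s :=
      ((totalDegree_mul _ _).trans (add_le_add hAn1 hBt)).trans_lt hlt
    apply hs
    rw [hcomp s hlt.le, homogeneousComponent_eq_zero _ _ hdeg, smul_zero, add_zero]
    exact hAn s

end Subfield

end MvPolynomial

open MvPolynomial

theorem deficit2_eq_totalDegree_sub_sSup {K : Type*} [Field K] (F : Subfield K)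
    (q : MvPolynomial (Fin 2) K) : deficit2 F q = q.totalDegree - sSup (degreesNotIn F q) := by
  simp only [deficit2, degreesNotIn, mem_coeffSubring, not_forall]

theorem stmt10_general {K : Type*} [Field K] [CharZero K] (F : Subfield K)
    (p : K[X]) (hp : 0 < p.natDegree) (hpl : p.leadingCoeff ∈ F)
    (q : MvPolynomial (Fin 2) K)
    (hqm : ∀ d, MvPolynomial.coeff d
      (MvPolynomial.homogeneousComponent q.totalDegree q) ∈ F)
    (hj : ∃ j, 1 ≤ j ∧
      ∃ d, MvPolynomial.coeff d (MvPolynomial.homogeneousComponent j q) ∉ F) :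
    (∃ d, MvPolynomial.coeff d (Polynomial.aeval q p) ∉ F) ∧
      deficit2 F (Polynomial.aeval q p) = deficit2 F q := by
  obtain ⟨j, hj1, d, hd⟩ := hj
  have hj : j ∈ degreesNotIn F q := fun h => hd (mem_coeffSubring.1 h d)
  obtain ⟨t, ht⟩ := (bddAbove_degreesNotIn F q).exists_isGreatest_of_nonempty ⟨j, hj⟩
  have htm : t < q.totalDegree := (le_totalDegree_of_mem_degreesNotIn ht.1).lt_of_ne
    fun h => ht.1 (h ▸ mem_coeffSubring.2 hqm)
  have hP := isGreatest_degreesNotIn_aeval hp hpl ht (hj1.trans (ht.2 hj)) htm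
  refine ⟨?_, ?_⟩
  · by_contra! h
    exact hP.1 (homogeneousComponent_mem_coeffSubring (mem_coeffSubring.2 h) _)
  · rw [deficit2_eq_totalDegree_sub_sSup, deficit2_eq_totalDegree_sub_sSup, hP.csSup_eq,
      ht.csSup_eq, totalDegree_aeval]
    obtain ⟨n, hn⟩ := Nat.exists_eq_add_of_lt hp
    rw [hn, zero_add, Nat.add_sub_cancel, Nat.succ_mul]
    omega

theorem stmt10 {K : Type*} [Field K] [CharZero K] (F : Subfield K) (hF : F ≠ ⊤)
    (p : K[X]) (hp : 0 < p.natDegree) (hpl : p.leadingCoeff ∈ F)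
    (q : MvPolynomial (Fin 2) K) (hq : q ≠ 0)
    (hqF : ∃ d, MvPolynomial.coeff d q ∉ F)
    (hqm : ∀ d, MvPolynomial.coeff d
      (MvPolynomial.homogeneousComponent q.totalDegree q) ∈ F)
    (hj : ∃ j, 1 ≤ j ∧
      ∃ d, MvPolynomial.coeff d (MvPolynomial.homogeneousComponent j q) ∉ F) :
    (∃ d, MvPolynomial.coeff d (Polynomial.aeval q p) ∉ F) ∧
      deficit2 F (Polynomial.aeval q p) = deficit2 F q :=
  stmt10_general F p hp hpl q hqm hj
end

section
/- Let F ⊂ K be fields of characteristic t, with F a proper subfield of K. Let p(x) = Σ_{k=0}^n a_k x^k ∈ K[x] be nonconstant with a_n ≠ 0, and let q(x) = Σ_{j=0}^m b_j x^j ∈ K[x] with b_m ≠ 0, such that a_n ∈ F, b_m ∈ F, and b_j ∉ F for some j ≥ 1. If t does not divide n, then the composition p ∘ q has some coefficient not in F, and D_F(p ∘ q) = D_F(q). -/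
open Polynomial

/-!
Let `J ≥ 1` be the largest index with `b_J ∉ F` and split `q = r + s`, where `r ∈ F[X]` has
degree `m` and `deg s ≤ J`. Above degree `(n - 1) m` only the top term `a_n q^n` of `p ∘ q`
contributes, and above degree `(n - 2) m + 2J` the binomial expansion of `(r + s)^n` reduces to
`r^n + n r^(n-1) s`. Hence from index `(n - 1) m + J` on, `p ∘ q` has the coefficients of
`a_n (r^n + n r^(n-1) s)`: they lie in `F` beyond that index, and at that index the coefficient
differs from `a_n n b_m^(n-1) b_J ∉ F` by an element of `F`, because `n ≠ 0` in `K`.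
-/

section CommSemiring

variable {R : Type*} [CommSemiring R]

theorem Polynomial.coeff_comp_eq_leadingCoeff_mul_coeff_pow_s12 {p q : R[X]} {i : ℕ}
    (hi : (p.natDegree - 1) * q.natDegree < i) :
    (p.comp q).coeff i = p.leadingCoeff * (q ^ p.natDegree).coeff i := by
  have hlow : ((eraseLead p).comp q).natDegree < i :=
    natDegree_comp_le.trans_lt <|
      (Nat.mul_le_mul_right _ (eraseLead_natDegree_le p)).trans_lt hi
  conv_lhs => rw [← eraseLead_add_C_mul_X_pow p]
  rw [add_comp, coeff_add, coeff_eq_zero_of_natDegree_lt hlow, zero_add, mul_comp, C_comp,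
    X_pow_comp, coeff_C_mul]

theorem Polynomial.coeff_add_pow_succ {r s : R[X]} {m J n i : ℕ} (hr : r.natDegree ≤ m)
    (hs : s.natDegree ≤ J) (hJm : J < m) (hi : n * m + J ≤ i) :
    ((r + s) ^ (n + 1)).coeff i =
      (r ^ (n + 1)).coeff i + (n + 1 : ℕ) * (r ^ n * s).coeff i := by
  have hsmall : ∀ k ∈ Finset.range n,
      (r ^ k * s ^ (n + 1 - k) * ((n + 1).choose k : R[X])).coeff i = 0 := by
    intro k hk
    obtain ⟨d, rfl⟩ : ∃ d, n = k + d + 1 := ⟨n - k - 1, by simp at hk; omega⟩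
    apply coeff_eq_zero_of_natDegree_lt
    calc _ ≤ k * m + (d + 2) * J + 0 :=
          natDegree_mul_le_of_le (natDegree_mul_le_of_le (natDegree_pow_le_of_le k hr)
            (by rw [show k + d + 1 + 1 - k = d + 2 by omega]; exact natDegree_pow_le_of_le _ hs))
            (natDegree_natCast _).le
      _ < (k + d + 1) * m + J := by nlinarith
      _ ≤ i := hi
  rw [add_pow, Finset.sum_range_succ, Finset.sum_range_succ, coeff_add, coeff_add,
    finsetSum_coeff, Finset.sum_eq_zero hsmall, Nat.choose_succ_self_right, Nat.choose_self,
    Nat.sub_self, Nat.add_sub_cancel_left, pow_zero, pow_one, mul_one, Nat.cast_one, mul_one,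
    ← C_eq_natCast, coeff_mul_C]
  ring

theorem Polynomial.coeff_comp_add {p r s : R[X]} {m J n i : ℕ} (hp : p.natDegree = n + 1)
    (hr : r.natDegree ≤ m) (hs : s.natDegree ≤ J) (hJ : 0 < J) (hJm : J < m)
    (hi : n * m + J ≤ i) :
    (p.comp (r + s)).coeff i =
      p.leadingCoeff * ((r ^ (n + 1)).coeff i + (n + 1 : ℕ) * (r ^ n * s).coeff i) := by
  have hrs : (r + s).natDegree ≤ m := natDegree_add_le_of_degree_le hr (hs.trans hJm.le)
  rw [coeff_comp_eq_leadingCoeff_mul_coeff_pow_s12, hp, coeff_add_pow_succ hr hs hJm hi]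
  rw [hp, Nat.add_sub_cancel]
  calc n * (r + s).natDegree ≤ n * m := Nat.mul_le_mul_left n hrs
    _ < i := by omega

end CommSemiring

section Subfield

variable {K : Type*} [Field K] {F : Subfield K}

theorem Subfield.mem_of_mul_mem_left {a b : K} (ha : a ∈ F) (ha0 : a ≠ 0) (hab : a * b ∈ F) :
    b ∈ F := by
  simpa [ha0] using F.mul_mem (F.inv_mem ha) hab

theorem Polynomial.coeff_pow_mem_of_forall_coeff_mem {r : K[X]} (hr : ∀ i, r.coeff i ∈ F)
    (n i : ℕ) : (r ^ n).coeff i ∈ F := by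
  have hlifts : r ∈ lifts F.subtype :=
    (lifts_iff_coeff_lifts r).2 fun i => ⟨⟨_, hr i⟩, rfl⟩
  obtain ⟨x, hx⟩ := (lifts_iff_coeff_lifts _).1 (pow_mem hlifts n) i
  exact hx ▸ x.2

theorem Polynomial.exists_le_isGreatest_coeff_notMem {q : K[X]} {j : ℕ} (hj : q.coeff j ∉ F) :
    ∃ J, j ≤ J ∧ IsGreatest {k | q.coeff k ∉ F} J := by
  have hbdd : BddAbove {k | q.coeff k ∉ F} :=
    ⟨q.natDegree, fun k hk => le_natDegree_of_ne_zero fun h => hk (h ▸ F.zero_mem)⟩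
  exact ⟨_, le_csSup hbdd hj, Nat.sSup_mem ⟨j, hj⟩ hbdd, fun k hk => le_csSup hbdd hk⟩

theorem Polynomial.exists_eq_add_of_isGreatest_coeff_notMem {q : K[X]} {J : ℕ}
    (hq : IsGreatest {k | q.coeff k ∉ F} J) (hql : q.leadingCoeff ∈ F) :
    J < q.natDegree ∧ ∃ r s : K[X], q = r + s ∧ (∀ k, r.coeff k ∈ F) ∧
      r.natDegree ≤ q.natDegree ∧ r.coeff q.natDegree ≠ 0 ∧
      s.natDegree ≤ J ∧ s.coeff J ∉ F := by
  have hqF : ∀ k, J < k → q.coeff k ∈ F := fun k hk => by_contra fun h => (hq.2 h).not_gt hk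
  have hJm : J < q.natDegree :=
    (le_natDegree_of_ne_zero fun h => hq.1 (h ▸ F.zero_mem)).lt_of_ne fun h => hq.1 (h ▸ hql)
  set s : K[X] := PowerSeries.trunc (J + 1) (q : PowerSeries K)
  have hs_coeff (k : ℕ) : s.coeff k = if k ≤ J then q.coeff k else 0 := by
    simp [s, PowerSeries.coeff_trunc]
  have hs : s.natDegree ≤ J := Nat.lt_succ_iff.1 (PowerSeries.natDegree_trunc_lt _ J)
  refine ⟨hJm, q - s, s, (sub_add_cancel q s).symm, fun k => ?_,
    (natDegree_sub_le q s).trans (max_le le_rfl (hs.trans hJm.le)), ?_, hs,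
    by simpa [hs_coeff] using hq.1⟩
  · by_cases hk : k ≤ J
    · simp [hs_coeff, hk]
    · simpa [hs_coeff, hk] using hqF k (not_le.1 hk)
  · rw [coeff_sub, hs_coeff, if_neg hJm.not_ge, sub_zero]
    exact leadingCoeff_ne_zero.2 (ne_zero_of_natDegree_gt hJm)

theorem Polynomial.isGreatest_coeff_comp_add_notMem {p r s : K[X]} {n m J : ℕ}
    (hp : p.natDegree = n + 1) (hpl : p.leadingCoeff ∈ F) (hn : ((n + 1 : ℕ) : K) ≠ 0)
    (hrF : ∀ k, r.coeff k ∈ F) (hr : r.natDegree ≤ m) (hrm : r.coeff m ≠ 0)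
    (hs : s.natDegree ≤ J) (hsJ : s.coeff J ∉ F) (hJ : 0 < J) (hJm : J < m) :
    IsGreatest {k | (p.comp (r + s)).coeff k ∉ F} (n * m + J) := by
  have hrs : (r ^ n * s).natDegree ≤ n * m + J :=
    natDegree_mul_le_of_le (natDegree_pow_le_of_le n hr) hs
  have hpow : ∀ i, (r ^ (n + 1)).coeff i ∈ F := coeff_pow_mem_of_forall_coeff_mem hrF _
  refine ⟨fun hmem => hsJ ?_, fun i (hi : _ ∉ F) => not_lt.1 fun hlt => hi ?_⟩
  · have hp0 : p.leadingCoeff ≠ 0 :=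
      leadingCoeff_ne_zero.2 (ne_zero_of_natDegree_gt (n := 0) (by omega))
    rw [coeff_comp_add hp hr hs hJ hJm le_rfl, coeff_mul_add_eq_of_natDegree_le
      (natDegree_pow_le_of_le n hr) hs, coeff_pow_of_natDegree_le hr, ← mul_assoc] at hmem
    have hmem' := Subfield.mem_of_mul_mem_left hpl hp0 hmem
    rw [add_mem_cancel_left (hpow _)] at hmem'
    exact Subfield.mem_of_mul_mem_left (F.mul_mem (natCast_mem F _) (F.pow_mem (hrF m) n))
      (mul_ne_zero hn (pow_ne_zero _ hrm)) hmem'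
  · rw [coeff_comp_add hp hr hs hJ hJm hlt.le, coeff_eq_zero_of_natDegree_lt (hrs.trans_lt hlt),
      mul_zero, add_zero]
    exact F.mul_mem hpl (hpow i)

end Subfield

theorem stmt12_general {K : Type*} [Field K] (t : ℕ) [CharP K t]
    (F : Subfield K)
    (p q : K[X]) (hp : 0 < p.natDegree)
    (hpl : p.leadingCoeff ∈ F) (hql : q.leadingCoeff ∈ F)
    (hj : ∃ j, 1 ≤ j ∧ q.coeff j ∉ F)
    (hdvd : ¬ t ∣ p.natDegree) :
    (∃ k, (p.comp q).coeff k ∉ F) ∧ deficit F (p.comp q) = deficit F q := by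
  obtain ⟨n, hn⟩ : ∃ n, p.natDegree = n + 1 := ⟨p.natDegree - 1, by omega⟩
  obtain ⟨j, hj1, hjF⟩ := hj
  obtain ⟨J, hjJ, hJ⟩ := exists_le_isGreatest_coeff_notMem hjF
  have hn0 : ((n + 1 : ℕ) : K) ≠ 0 := by
    rw [← hn, Ne, CharP.cast_eq_zero_iff K t]
    exact hdvd
  obtain ⟨hJm, r, s, hqrs, hrF, hr, hrm, hs, hsJ⟩ :=
    exists_eq_add_of_isGreatest_coeff_notMem hJ hql
  have hcomp :=
    isGreatest_coeff_comp_add_notMem hn hpl hn0 hrF hr hrm hs hsJ (hj1.trans hjJ) hJm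
  rw [← hqrs] at hcomp
  refine ⟨⟨_, hcomp.1⟩, ?_⟩
  rw [deficit, deficit, hcomp.csSup_eq, hJ.csSup_eq, natDegree_comp, hn, add_mul, one_mul,
    Nat.add_sub_add_left]

theorem stmt12 {K : Type*} [Field K] (t : ℕ) [CharP K t]
    (F : Subfield K) (hF : F ≠ ⊤)
    (p q : K[X]) (hp : 0 < p.natDegree) (hq : q ≠ 0)
    (hpl : p.leadingCoeff ∈ F) (hql : q.leadingCoeff ∈ F)
    (hj : ∃ j, 1 ≤ j ∧ q.coeff j ∉ F)
    (hdvd : ¬ t ∣ p.natDegree) :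
    (∃ k, (p.comp q).coeff k ∉ F) ∧ deficit F (p.comp q) = deficit F q :=
  stmt12_general t F p q hp hpl hql hj hdvd
end

section
/- There exist an entire function f : ℂ → ℂ and a quadratic polynomial q(z) = a₂z² + a₁z + a₀ with complex coefficients such that: (1) some Taylor coefficient of f at 0 is not real, and some coefficient of q is not real; (2) a₀ and a₂ are both real; and (3) every Taylor coefficient of the composition f ∘ q at 0 is real. -/
open Complex FormalMultilinearSeries Nat
open scoped Real

/-!
Take `q(z) = z² + πi z - π²/4 = (z + πi/2)²` and `f(w) = -i cosh √w`, which is entire because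
`cosh` is even (its power series in `s²` is `∑ wⁿ/(2n)!`). Since `cosh (z + πi/2) = i sinh z`, we
get `f ∘ q = sinh`, whose Taylor coefficients are real, while `f(0) = -i`.
-/

noncomputable def coshSqrtSeries : FormalMultilinearSeries ℂ ℂ ℂ :=
  ofScalars ℂ fun n => ((2 * n)! : ℂ)⁻¹

lemma coshSqrtSeries_radius : coshSqrtSeries.radius = ⊤ := by
  refine radius_eq_top_of_summable_norm _ fun r => ?_
  refine (Real.summable_pow_div_factorial r).of_nonneg_of_le (fun n => by positivity) fun n => ?_
  rw [coshSqrtSeries, ofScalars_norm, norm_inv, Complex.norm_natCast, inv_mul_eq_div]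
  gcongr
  omega

noncomputable def coshSqrt : ℂ → ℂ := coshSqrtSeries.sum

lemma hasSum_coshSqrt (w : ℂ) : HasSum (fun n => w ^ n / (2 * n)!) (coshSqrt w) := by
  have := coshSqrtSeries.hasSum (x := w) (by simp [coshSqrtSeries_radius])
  simpa [coshSqrt, coshSqrtSeries, ofScalars_apply_eq, div_eq_mul_inv] using this

lemma differentiable_coshSqrt : Differentiable ℂ coshSqrt := by
  have h :=
    (coshSqrtSeries.hasFPowerSeriesOnBall (by simp [coshSqrtSeries_radius])).differentiableOn
  rw [coshSqrtSeries_radius] at h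
  exact fun w => h.differentiableAt (by simp)

lemma coshSqrt_sq (s : ℂ) : coshSqrt (s ^ 2) = cosh s := by
  refine (hasSum_coshSqrt _).unique ?_
  simpa [← pow_mul] using hasSum_cosh s

lemma coshSqrt_zero : coshSqrt 0 = 1 := by
  simpa using coshSqrt_sq 0

lemma cosh_add_pi_div_two_mul_I (z : ℂ) : cosh (z + π / 2 * I) = I * sinh z := by
  rw [cosh_add, cosh_mul_I, sinh_mul_I, ← ofReal_ofNat, ← ofReal_div, ← ofReal_cos, ← ofReal_sin,
    Real.cos_pi_div_two, Real.sin_pi_div_two]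
  push_cast
  ring

lemma iteratedDeriv_add_two_sinh (k : ℕ) : iteratedDeriv (k + 2) sinh = iteratedDeriv k sinh := by
  rw [iteratedDeriv_succ', iteratedDeriv_succ', Complex.deriv_sinh, Complex.deriv_cosh]

lemma im_iteratedDeriv_sinh_ofReal (x : ℝ) : ∀ k, (iteratedDeriv k sinh (x : ℂ)).im = 0
  | 0 => by simp
  | 1 => by simp
  | k + 2 => by rw [iteratedDeriv_add_two_sinh, im_iteratedDeriv_sinh_ofReal x k]

theorem stmt13 : ∃ (f : ℂ → ℂ) (a₂ a₁ a₀ : ℂ),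
    Differentiable ℂ f ∧ a₂ ≠ 0 ∧
    (∃ k : ℕ, (iteratedDeriv k f 0 / (Nat.factorial k : ℂ)).im ≠ 0) ∧
    (a₂.im ≠ 0 ∨ a₁.im ≠ 0 ∨ a₀.im ≠ 0) ∧
    a₀.im = 0 ∧ a₂.im = 0 ∧
    (∀ k : ℕ,
      (iteratedDeriv k (fun z => f (a₂ * z ^ 2 + a₁ * z + a₀)) 0 /
        (Nat.factorial k : ℂ)).im = 0) := by
  have hf_comp_q : (fun z => -I * coshSqrt (1 * z ^ 2 + π * I * z + -π ^ 2 / 4)) = sinh := by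
    funext z
    have hsq : 1 * z ^ 2 + π * I * z + -π ^ 2 / 4 = (z + π / 2 * I) ^ 2 := by
      linear_combination (-π ^ 2 / 4 : ℂ) * I_sq
    rw [hsq, coshSqrt_sq, cosh_add_pi_div_two_mul_I, ← mul_assoc, neg_mul, I_mul_I, neg_neg,
      one_mul]
  refine ⟨fun w => -I * coshSqrt w, 1, π * I, -π ^ 2 / 4, differentiable_coshSqrt.const_mul _,
    one_ne_zero, ⟨0, ?_⟩, Or.inr (Or.inl ?_), ?_, by simp, fun k => ?_⟩
  · simp [coshSqrt_zero]
  · simp [Real.pi_ne_zero]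
  · simp [← ofReal_pow]
  · rw [hf_comp_q, div_natCast_im, ← ofReal_zero, im_iteratedDeriv_sinh_ofReal, zero_div]
end

section
/- Let F be a subfield of ℂ with π² ∉ F. Then there exist an entire function f : ℂ → ℂ and a quadratic polynomial q(z) = a₂z² + a₁z + a₀ with complex coefficients such that: (1) some Taylor coefficient of f at 0 does not lie in F, and some coefficient of q does not lie in F; (2) a₀ and a₂ both lie in F; and (3) every Taylor coefficient of the composition f ∘ q at 0 lies in F. -/
/-!
Since `cos` is even, `cos √v` is an entire function of `v`. Take `f w = cos √(w + π²/4)` and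
`q z = z² - π z`: then `q z + π²/4 = (z - π/2)²`, so `f ∘ q = sin`, whose Taylor coefficients are
rational. On the other hand `f'(0) = -1/π` and `a₁ = -π`, and neither lies in `F` because
`π² ∉ F`.
-/

open Complex Topology

lemma Complex.sq_sqrt (a : ℂ) : sqrt a ^ 2 = a :=
  cpow_nat_inv_pow a two_ne_zero

noncomputable def cosSqrt (v : ℂ) : ℂ := cos (sqrt v)

lemma cosSqrt_eq_cos_of_sq_eq {v w : ℂ} (h : w ^ 2 = v) : cosSqrt v = cos w := by
  rcases sq_eq_sq_iff_eq_or_eq_neg.mp ((sq_sqrt v).trans h.symm) with h' | h'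
  · rw [cosSqrt, h']
  · rw [cosSqrt, h', cos_neg]

lemma cosSqrt_sq (u : ℂ) : cosSqrt (u ^ 2) = cos u :=
  cosSqrt_eq_cos_of_sq_eq rfl

lemma differentiableAt_cosSqrt_of_ne_zero {v : ℂ} (hv : v ≠ 0) :
    DifferentiableAt ℂ cosSqrt v := by
  rcases mem_slitPlane_or_neg_mem_slitPlane hv with h | h
  · exact differentiable_cos.differentiableAt.comp v (differentiableAt_sqrt h)
  · have hI : cosSqrt = fun x => cos (I * sqrt (-x)) := funext fun x =>
      cosSqrt_eq_cos_of_sq_eq (by rw [mul_pow, I_sq, sq_sqrt]; ring)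
    rw [hI]
    exact differentiable_cos.differentiableAt.comp v
      (((differentiableAt_sqrt h).comp v differentiableAt_id.neg).const_mul I)

lemma differentiable_cosSqrt : Differentiable ℂ cosSqrt := by
  intro v
  rcases eq_or_ne v 0 with rfl | hv
  · have hc : ContinuousAt cosSqrt 0 :=
      continuous_cos.continuousAt.comp (continuousAt_sqrt (by simp))
    have hd : ∀ᶠ z in 𝓝[≠] (0 : ℂ), DifferentiableAt ℂ cosSqrt z :=
      eventually_nhdsWithin_of_forall fun z hz => differentiableAt_cosSqrt_of_ne_zero hz
    exact (analyticAt_of_differentiable_on_punctured_nhds_of_continuousAt hd hc).differentiableAt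
  · exact differentiableAt_cosSqrt_of_ne_zero hv

lemma deriv_cosSqrt_sq {u : ℂ} (hu : u ≠ 0) : deriv cosSqrt (u ^ 2) = -sin u / (2 * u) := by
  have hcomp : HasDerivAt (fun x => cosSqrt (x ^ 2)) (deriv cosSqrt (u ^ 2) * (2 * u)) u := by
    have hsq : HasDerivAt (· ^ 2) (2 * u) u := by simpa using hasDerivAt_pow 2 u
    exact (differentiable_cosSqrt _).hasDerivAt.comp u hsq
  have hcos : HasDerivAt (fun x => cosSqrt (x ^ 2)) (-sin u) u := by
    simpa only [cosSqrt_sq] using hasDerivAt_cos u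
  rw [eq_div_iff (mul_ne_zero two_ne_zero hu), hcomp.unique hcos]

lemma iteratedDeriv_sin_zero_div_factorial_mem (F : Subfield ℂ) (k : ℕ) :
    iteratedDeriv k sin 0 / (Nat.factorial k : ℂ) ∈ F := by
  refine div_mem ?_ (natCast_mem F _)
  obtain ⟨n, rfl | rfl⟩ := Nat.even_or_odd' k
  · simp [iteratedDeriv_even_sin]
  · simpa [iteratedDeriv_odd_sin] using pow_mem (neg_mem (one_mem F)) n

theorem stmt14 (F : Subfield ℂ) (hπ : ((Real.pi : ℂ)) ^ 2 ∉ F) :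
    ∃ (f : ℂ → ℂ) (a₂ a₁ a₀ : ℂ),
      Differentiable ℂ f ∧ a₂ ≠ 0 ∧
      (∃ k : ℕ, iteratedDeriv k f 0 / (Nat.factorial k : ℂ) ∉ F) ∧
      (a₂ ∉ F ∨ a₁ ∉ F ∨ a₀ ∉ F) ∧
      a₀ ∈ F ∧ a₂ ∈ F ∧
      (∀ k : ℕ,
        iteratedDeriv k (fun z => f (a₂ * z ^ 2 + a₁ * z + a₀)) 0 /
          (Nat.factorial k : ℂ) ∈ F) := by
  set π : ℂ := (Real.pi : ℂ)
  have hπF : π ∉ F := fun h => hπ (pow_mem h 2)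
  have hπ0 : π ≠ 0 := ofReal_ne_zero.mpr Real.pi_ne_zero
  refine ⟨fun w => cosSqrt (w + (π / 2) ^ 2), 1, -π, 0,
    differentiable_cosSqrt.comp (differentiable_id.add_const _), one_ne_zero,
    ⟨1, ?_⟩, .inr (.inl fun h => hπF (by simpa using neg_mem h)), zero_mem F, one_mem F, ?_⟩
  · have hderiv : deriv (fun w => cosSqrt (w + (π / 2) ^ 2)) 0 = -π⁻¹ := by
      rw [deriv_comp_add_const, zero_add, deriv_cosSqrt_sq (div_ne_zero hπ0 two_ne_zero),
        sin_pi_div_two]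
      field_simp
    simpa [hderiv] using hπF
  · have hsin : (fun z => cosSqrt (1 * z ^ 2 + -π * z + 0 + (π / 2) ^ 2)) = sin := by
      funext z
      rw [cosSqrt_eq_cos_of_sq_eq (w := z - π / 2) (by ring), cos_sub_pi_div_two]
    exact fun k => hsin ▸ iteratedDeriv_sin_zero_div_factorial_mem F k
end
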